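/- arXiv:2408.15111 — 6 statements merged into one kernel-verified Lean document; each statement's English description precedes it below -/
import Mathlib

section
/- For all n ≥ 1: the number of permutations in S_n({123,231}) with no big descents is n; the number with exactly one big descent is C(n−1, 2); and there are no permutations in S_n({123,231}) with two or more big descents. -/
open scoped Classical

/-- A permutation `π` of `Fin n` contains the pattern `σ` (a permutation of `Fin m`)
if some subsequence of the one-line notation of `π` standardizes to `σ`. -/
def Contains {n m : ℕ} (π : Equiv.Perm (Fin n)) (σ : Equiv.Perm (Fin m)) : Prop :=
  ∃ f : Fin m → Fin n, StrictMono f ∧ ∀ a b : Fin m, σ a < σ b ↔ π (f a) < π (f b)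

/-- `π` avoids the pattern `σ`. -/
def Avoids {n m : ℕ} (π : Equiv.Perm (Fin n)) (σ : Equiv.Perm (Fin m)) : Prop :=
  ¬ Contains π σ

/-- The pattern 123 (identity, in 0-indexed one-line notation `[0,1,2]`). -/
def perm123 : Equiv.Perm (Fin 3) := 1

/-- The pattern 132 (0-indexed one-line notation `[0,2,1]`). -/
def perm132 : Equiv.Perm (Fin 3) := ⟨![0, 2, 1], ![0, 2, 1], by decide, by decide⟩

/-- The pattern 213 (0-indexed one-line notation `[1,0,2]`). -/
def perm213 : Equiv.Perm (Fin 3) := ⟨![1, 0, 2], ![1, 0, 2], by decide, by decide⟩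

/-- The pattern 231 (0-indexed one-line notation `[1,2,0]`). -/
def perm231 : Equiv.Perm (Fin 3) := ⟨![1, 2, 0], ![2, 0, 1], by decide, by decide⟩

/-- The pattern 312 (0-indexed one-line notation `[2,0,1]`). -/
def perm312 : Equiv.Perm (Fin 3) := ⟨![2, 0, 1], ![1, 2, 0], by decide, by decide⟩

/-- The pattern 321 (0-indexed one-line notation `[2,1,0]`). -/
def perm321 : Equiv.Perm (Fin 3) := ⟨![2, 1, 0], ![2, 1, 0], by decide, by decide⟩

/-- The number of big descents of `π`: 0-indexed positions `k` with `π k > π (k+1) + 1`. -/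
def bdes {n : ℕ} (π : Equiv.Perm (Fin n)) : ℕ :=
  ((Finset.range n).filter fun k =>
    ∃ hk : k + 1 < n, (π ⟨k + 1, hk⟩ : ℕ) + 1 < (π ⟨k, Nat.lt_of_succ_lt hk⟩ : ℕ)).card

/-!
If `i < j` is an ascent of a permutation avoiding 123 and 231, then every entry after position
`j` lies strictly between `π i` and `π j`. So once `π` leaves the reversal `n-1, n-2, …, b`, the
largest remaining value `b-1` is preceded by a decreasing run of the smallest values and followed
by a decreasing run of the others: the avoiders are exactly the words
`n-1, …, b, k-1, …, 0, b-1, …, k`. Such a word has a big descent only from `b` to `k-1`, present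
iff `b < n` and `0 < k < b`, and counting the parameters gives `n` and `C(n-1, 2)`.
-/

open Equiv

theorem lt_iff_lt_of_lt_imp_lt {α β γ : Type*} [LinearOrder β] [Preorder γ] {g : α → β}
    {h : α → γ} (hg : Function.Injective g) (H : ∀ a b, g a < g b → h a < h b) (a b : α) :
    g a < g b ↔ h a < h b := by
  refine ⟨H a b, fun hab => lt_of_not_ge fun hba => ?_⟩
  rcases hba.lt_or_eq with hlt | heq
  · exact (H b a hlt).not_gt hab
  · exact (hg heq ▸ hab).false

theorem Equiv.Perm.eq_of_lt_imp_lt {α : Type*} [LinearOrder α] [Finite α] {σ π : Perm α}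
    (h : ∀ i j, σ i < σ j → π i < π j) : π = σ := by
  have hmono : StrictMono (π ∘ σ.symm) := fun x y hxy => by
    simpa using h (σ.symm x) (σ.symm y) (by simpa using hxy)
  ext i
  simpa using congrFun hmono.eq_id (σ i)

theorem strictMono_vecCons_three {α : Type*} [Preorder α] {x y z : α} (hxy : x < y)
    (hyz : y < z) : StrictMono ![x, y, z] :=
  Fin.strictMono_iff_lt_succ.2 <| by simp [Fin.forall_fin_two, hxy, hyz]

section Patterns

variable {n : ℕ}

theorem contains_perm123_iff (π : Perm (Fin n)) :
    Contains π perm123 ↔ ∃ i j l, i < j ∧ j < l ∧ π i < π j ∧ π j < π l := by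
  constructor
  · rintro ⟨f, hf, hσ⟩
    exact ⟨f 0, f 1, f 2, hf (by decide), hf (by decide),
      (hσ 0 1).1 (by decide), (hσ 1 2).1 (by decide)⟩
  · rintro ⟨i, j, l, hij, hjl, h₁, h₂⟩
    refine ⟨![i, j, l], strictMono_vecCons_three hij hjl,
      lt_iff_lt_of_lt_imp_lt perm123.injective fun a b hab => ?_⟩
    fin_cases a <;> fin_cases b <;> first
      | exact absurd hab (by decide)
      | exact h₁
      | exact h₂
      | exact h₁.trans h₂

theorem contains_perm231_iff (π : Perm (Fin n)) :
    Contains π perm231 ↔ ∃ i j l, i < j ∧ j < l ∧ π l < π i ∧ π i < π j := by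
  constructor
  · rintro ⟨f, hf, hσ⟩
    exact ⟨f 0, f 1, f 2, hf (by decide), hf (by decide),
      (hσ 2 0).1 (by decide), (hσ 0 1).1 (by decide)⟩
  · rintro ⟨i, j, l, hij, hjl, h₁, h₂⟩
    refine ⟨![i, j, l], strictMono_vecCons_three hij hjl,
      lt_iff_lt_of_lt_imp_lt perm231.injective fun a b hab => ?_⟩
    fin_cases a <;> fin_cases b <;> first
      | exact absurd hab (by decide)
      | exact h₁
      | exact h₂
      | exact h₁.trans h₂

theorem avoids_perm123_and_perm231_iff (π : Perm (Fin n)) :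
    Avoids π perm123 ∧ Avoids π perm231 ↔
      ∀ ⦃i j l⦄, i < j → j < l → π i < π j → π i < π l ∧ π l < π j := by
  simp only [Avoids, contains_perm123_iff, contains_perm231_iff, not_exists, not_and]
  refine ⟨fun ⟨h123, h231⟩ i j l hij hjl hasc => ⟨?_, ?_⟩, fun h => ⟨?_, ?_⟩⟩
  · exact lt_of_le_of_ne (not_lt.1 fun hli => h231 i j l hij hjl hli hasc)
      (π.injective.ne (hij.trans hjl).ne)
  · exact lt_of_le_of_ne (not_lt.1 fun hjl' => h123 i j l hij hjl hasc hjl')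
      (π.injective.ne hjl.ne')
  · exact fun i j l hij hjl h₁ h₂ => (h hij hjl h₁).2.asymm h₂
  · exact fun i j l hij hjl h₁ h₂ => (h hij hjl h₂).1.asymm h₁

end Patterns

/-- The entries of the word `n-1, …, b, k-1, …, 0, b-1, …, k`. -/
def avoiderFun (n b k i : ℕ) : ℕ :=
  if i < n - b then n - 1 - i else if i < n - b + k then n - b + k - 1 - i else n - 1 + k - i

noncomputable def avoiderPerm (n b k : ℕ) (hkb : k ≤ b) (hbn : b ≤ n) : Perm (Fin n) :=
  Equiv.ofBijective
    (fun i => ⟨avoiderFun n b k i, by have := i.isLt; unfold avoiderFun; split_ifs <;> omega⟩)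
    (Finite.injective_iff_bijective.1 fun i j hij => by
      have := i.isLt; have := j.isLt
      simp only [Fin.mk.injEq, avoiderFun] at hij
      ext; split_ifs at hij <;> omega)

section AvoiderPerm

variable {n b k : ℕ}

theorem avoiderPerm_apply (hkb : k ≤ b) (hbn : b ≤ n) (i : Fin n) :
    (avoiderPerm n b k hkb hbn i : ℕ) = avoiderFun n b k i := rfl

theorem avoids_avoiderPerm (hkb : k ≤ b) (hbn : b ≤ n) :
    Avoids (avoiderPerm n b k hkb hbn) perm123 ∧ Avoids (avoiderPerm n b k hkb hbn) perm231 :=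
  (avoids_perm123_and_perm231_iff _).2 fun i j l hij hjl hasc => by
    simp only [Fin.lt_def, avoiderPerm_apply, avoiderFun] at *
    have := l.isLt
    split_ifs at * <;> omega

theorem bdes_avoiderPerm (hkb : k ≤ b) (hbn : b ≤ n) :
    bdes (avoiderPerm n b k hkb hbn) = if b < n ∧ 0 < k ∧ k < b then 1 else 0 := by
  have hdes : (Finset.range n).filter (fun i => ∃ hi : i + 1 < n,
      (avoiderPerm n b k hkb hbn ⟨i + 1, hi⟩ : ℕ) + 1 <
        (avoiderPerm n b k hkb hbn ⟨i, Nat.lt_of_succ_lt hi⟩ : ℕ)) =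
      if b < n ∧ 0 < k ∧ k < b then {n - b - 1} else ∅ := by
    ext i
    simp only [Finset.mem_filter, Finset.mem_range, avoiderPerm_apply, avoiderFun]
    split_ifs <;> simp <;> omega
  rw [bdes, hdes]
  split_ifs <;> rfl

theorem avoiderPerm_apply_last (hkb : k < b) (hbn : b ≤ n) :
    (avoiderPerm n b k hkb.le hbn ⟨n - 1, by omega⟩ : ℕ) = k := by
  simp only [avoiderPerm_apply, avoiderFun]
  split_ifs <;> omega

theorem avoiderPerm_inj {b' k' : ℕ} (hk : 0 < k) (hkb : k < b) (hbn : b ≤ n)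
    (hk' : 0 < k') (hkb' : k' < b') (hbn' : b' ≤ n) :
    avoiderPerm n b k hkb.le hbn = avoiderPerm n b' k' hkb'.le hbn' ↔ b = b' ∧ k = k' := by
  refine ⟨fun h => ?_, by rintro ⟨rfl, rfl⟩; rfl⟩
  have hlast := avoiderPerm_apply_last hkb hbn
  rw [h, avoiderPerm_apply_last hkb' hbn'] at hlast
  -- the entry `0` sits at position `n - b + k - 1`
  have hzero := congrArg (fun π : Perm (Fin n) => (π ⟨n - b + k - 1, by omega⟩ : ℕ)) h
  simp only [avoiderPerm_apply, avoiderFun] at hzero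
  split_ifs at hzero <;> omega

end AvoiderPerm

theorem eq_avoiderPerm_of_forall_between {n : ℕ} {π : Perm (Fin n)}
    (hπ : ∀ ⦃i j l⦄, i < j → j < l → π i < π j → π i < π l ∧ π l < π j) {a t : Fin n}
    (hpre : ∀ i < a, (π i : ℕ) = n - 1 - i) (hat : a < t) (ht : (π t : ℕ) = n - 1 - a) :
    π = avoiderPerm n (n - a) (t - a) (by omega) (by omega) := by
  have hlow (i : Fin n) (hi : a ≤ i) : (π i : ℕ) + a < n := by
    by_contra! hge
    have hja : n - 1 - (π i : ℕ) < a := by omega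
    have hji : π ⟨_, hja.trans a.isLt⟩ = π i := Fin.ext (by rw [hpre _ hja]; simp; omega)
    exact not_lt.2 hi (π.injective hji ▸ hja)
  have hmax (i : Fin n) (hi : a ≤ i) (hit : i ≠ t) : π i < π t := by
    have := Fin.val_injective.ne (π.injective.ne hit)
    have := hlow i hi
    omega
  have hsplit (i l : Fin n) (hi : a ≤ i) (hit : i < t) (htl : t < l) : π i < π l :=
    (hπ hit htl (hmax i hi hit.ne)).1
  have hanti_before (i j : Fin n) (hi : a ≤ i) (hij : i < j) (hjt : j < t) : π j < π i :=
    lt_of_le_of_ne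
      (not_lt.1 fun hasc => (hπ hij hjt hasc).2.asymm (hmax j (hi.trans hij.le) hjt.ne))
      (π.injective.ne hij.ne')
  have hanti_after (i j : Fin n) (hti : t < i) (hij : i < j) : π j < π i :=
    (hπ (hat.trans hti) hij (hsplit a i le_rfl hat hti)).2
  refine Perm.eq_of_lt_imp_lt fun i j h => ?_
  simp only [Fin.lt_def, avoiderPerm_apply, avoiderFun] at h
  -- in each relative position of `i`, `j`, `t`, one of the facts above orders `π i` and `π j`
  have := hpre i; have := hpre j; have := hlow i; have := hlow j; have := hmax i
  have : j = t → π j = π t := congrArg π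
  have := hsplit i j; have := hanti_before j i; have := hanti_after j i
  have := i.isLt; have := j.isLt; have := t.isLt
  split_ifs at h <;> omega

theorem eq_avoiderPerm_of_avoids {n : ℕ} {π : Perm (Fin n)}
    (h : Avoids π perm123 ∧ Avoids π perm231) :
    π = avoiderPerm n 0 0 le_rfl n.zero_le ∨
      ∃ b k, 0 < k ∧ ∃ (hkb : k < b) (hbn : b ≤ n), π = avoiderPerm n b k hkb.le hbn := by
  rw [avoids_perm123_and_perm231_iff] at h
  by_cases hrev : ∀ i : Fin n, (π i : ℕ) = n - 1 - i
  · left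
    ext i
    simp [avoiderPerm_apply, avoiderFun, hrev]
  · right
    obtain ⟨a, ha, hmin⟩ :=
      WellFounded.has_min wellFounded_lt {i | (π i : ℕ) ≠ n - 1 - i} (not_forall.1 hrev)
    have hpre : ∀ i < a, (π i : ℕ) = n - 1 - i := fun i hi => by_contra fun h => hmin i h hi
    set t := π.symm ⟨n - 1 - a, by omega⟩
    have ht : (π t : ℕ) = n - 1 - a := by simp [t]
    have hat : a < t := by
      refine lt_of_le_of_ne (not_lt.1 fun hta => ?_) fun hat => ha (by simpa [← hat] using ht)
      have := hpre t hta
      omega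
    exact ⟨n - a, t - a, by omega, by omega, by omega,
      eq_avoiderPerm_of_forall_between h hpre hat ht⟩

section Counting

variable {n : ℕ}

theorem bdes_le_one_of_avoids {π : Perm (Fin n)} (h : Avoids π perm123 ∧ Avoids π perm231) :
    bdes π ≤ 1 := by
  rcases eq_avoiderPerm_of_avoids h with rfl | ⟨b, k, -, hkb, hbn, rfl⟩ <;>
    rw [bdes_avoiderPerm] <;> split_ifs <;> omega

theorem card_avoids_bdes_eq_zero (hn : 0 < n) :
    Nat.card {π : Perm (Fin n) // (Avoids π perm123 ∧ Avoids π perm231) ∧ bdes π = 0} = n := by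
  let f (k : Fin n) : {π : Perm (Fin n) // (Avoids π perm123 ∧ Avoids π perm231) ∧ bdes π = 0} :=
    ⟨avoiderPerm n n k k.isLt.le le_rfl, avoids_avoiderPerm _ _, by simp [bdes_avoiderPerm]⟩
  have hf : Function.Bijective f := by
    refine ⟨fun k k' hkk' => Fin.ext ?_, ?_⟩
    · have := congrArg (fun π => (π.1 ⟨n - 1, by omega⟩ : ℕ)) hkk'
      rwa [avoiderPerm_apply_last k.isLt le_rfl, avoiderPerm_apply_last k'.isLt le_rfl] at this
    · rintro ⟨π, hπ, hbdes⟩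
      rcases eq_avoiderPerm_of_avoids hπ with rfl | ⟨b, k, hk, hkb, hbn, rfl⟩
      · refine ⟨⟨0, hn⟩, Subtype.ext (Perm.ext fun i => Fin.ext ?_)⟩
        simp [f, avoiderPerm_apply, avoiderFun]
      · obtain rfl : b = n := by
          rw [bdes_avoiderPerm] at hbdes
          split_ifs at hbdes
          omega
        exact ⟨⟨k, hkb⟩, rfl⟩
  rw [← Nat.card_congr (Equiv.ofBijective f hf), Nat.card_fin]

theorem card_avoids_bdes_eq_one :
    Nat.card {π : Perm (Fin n) // (Avoids π perm123 ∧ Avoids π perm231) ∧ bdes π = 1} =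
      (n - 1).choose 2 := by
  let f (p : Σ b : Fin (n - 1), Fin b) :
      {π : Perm (Fin n) // (Avoids π perm123 ∧ Avoids π perm231) ∧ bdes π = 1} :=
    ⟨avoiderPerm n (p.1 + 1) (p.2 + 1) (by omega) (by omega), avoids_avoiderPerm _ _, by
      rw [bdes_avoiderPerm, if_pos (by omega)]⟩
  have hf : Function.Bijective f := by
    refine ⟨?_, ?_⟩
    · rintro ⟨b, k⟩ ⟨b', k'⟩ h
      have := b.isLt; have := b'.isLt
      obtain ⟨hb, hk⟩ := (avoiderPerm_inj (Nat.succ_pos k) (Nat.succ_lt_succ k.isLt) (by omega)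
        (Nat.succ_pos k') (Nat.succ_lt_succ k'.isLt) (by omega)).1 (congrArg Subtype.val h)
      obtain rfl : b = b' := Fin.ext (by omega)
      obtain rfl : k = k' := Fin.ext (by omega)
      rfl
    · rintro ⟨π, hπ, hbdes⟩
      rcases eq_avoiderPerm_of_avoids hπ with rfl | ⟨b, k, hk, hkb, hbn, rfl⟩
      · simp [bdes_avoiderPerm] at hbdes
      · have hb : b < n := by
          rw [bdes_avoiderPerm] at hbdes
          split_ifs at hbdes with hb
          exact hb.1
        obtain ⟨b, rfl⟩ : ∃ b', b = b' + 1 := ⟨b - 1, by omega⟩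
        obtain ⟨k, rfl⟩ : ∃ k', k = k' + 1 := ⟨k - 1, by omega⟩
        exact ⟨⟨⟨b, by omega⟩, ⟨k, Nat.lt_of_succ_lt_succ hkb⟩⟩, rfl⟩
  rw [← Nat.card_congr (Equiv.ofBijective f hf), Nat.card_sigma]
  simp [Fin.sum_univ_eq_sum_range (fun b => b), Finset.sum_range_id, Nat.choose_two_right]

end Counting

/-- For `n ≥ 1`: among permutations of length `n` avoiding both 123 and 231, exactly `n`
have no big descents, exactly `C(n-1,2)` have one big descent, and none have two or more. -/
theorem bdes_distribution_avoids123_231 (n : ℕ) (hn : 1 ≤ n) :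
    Nat.card {π : Equiv.Perm (Fin n) // (Avoids π perm123 ∧ Avoids π perm231) ∧ bdes π = 0} = n ∧
    Nat.card {π : Equiv.Perm (Fin n) // (Avoids π perm123 ∧ Avoids π perm231) ∧ bdes π = 1} =
      Nat.choose (n - 1) 2 ∧
    ∀ k, 2 ≤ k →
      Nat.card {π : Equiv.Perm (Fin n) // (Avoids π perm123 ∧ Avoids π perm231) ∧ bdes π = k}
        = 0 := by
  refine ⟨card_avoids_bdes_eq_zero hn, card_avoids_bdes_eq_one, fun k hk => ?_⟩
  have : IsEmpty {π : Perm (Fin n) // (Avoids π perm123 ∧ Avoids π perm231) ∧ bdes π = k} :=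
    ⟨fun ⟨_, hπ, hbdes⟩ => by have := bdes_le_one_of_avoids hπ; omega⟩
  exact Nat.card_of_isEmpty
end

section
/- For all n ≥ 2: the number of permutations in S_n({132,321}) with no big descents is 2; the number with exactly one big descent is C(n, 2) − 1; and there are no permutations in S_n({132,321}) with two or more big descents. -/
open scoped Classical

-- ===== auxiliary development =====

/-- The key first-order condition equivalent to avoiding 132 and 321. -/
def Pc {n : ℕ} (π : Equiv.Perm (Fin n)) : Prop :=
  ∀ i j k : Fin n, i < j → j < k → π k < π j → π k < π i ∧ π i < π j

lemma fin3_mk2 (h : 2 < 3) : (⟨2, h⟩ : Fin 3) = 2 := rfl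

lemma sm3 {n : ℕ} {x y z : Fin n} (h1 : x < y) (h2 : y < z) : StrictMono ![x, y, z] := by
  intro a b hab
  fin_cases a <;> fin_cases b <;>
    simp_all [Matrix.cons_val_zero, Matrix.cons_val_one, Matrix.head_cons] <;>
    exact lt_trans h1 h2

lemma contains132 {n : ℕ} (π : Equiv.Perm (Fin n)) (i j k : Fin n) (hij : i < j) (hjk : j < k)
    (h1 : π i < π k) (h2 : π k < π j) : Contains π perm132 := by
  have h3 : π i < π j := lt_trans h1 h2
  refine ⟨![i, j, k], sm3 hij hjk, ?_⟩
  intro a b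
  fin_cases a <;> fin_cases b <;>
    simp only [fin3_mk2, Fin.mk_zero, Fin.mk_one, Fin.isValue, Matrix.cons_val_zero,
      Matrix.cons_val_one, Matrix.head_cons, Matrix.cons_val_two, Matrix.tail_cons]
  · exact iff_of_false (by decide) (lt_irrefl _)
  · exact iff_of_true (by decide) h3
  · exact iff_of_true (by decide) h1
  · exact iff_of_false (by decide) (lt_asymm h3)
  · exact iff_of_false (by decide) (lt_irrefl _)
  · exact iff_of_false (by decide) (lt_asymm h2)
  · exact iff_of_false (by decide) (lt_asymm h1)
  · exact iff_of_true (by decide) h2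
  · exact iff_of_false (by decide) (lt_irrefl _)

lemma contains321 {n : ℕ} (π : Equiv.Perm (Fin n)) (i j k : Fin n) (hij : i < j) (hjk : j < k)
    (h1 : π j < π i) (h2 : π k < π j) : Contains π perm321 := by
  have h3 : π k < π i := lt_trans h2 h1
  refine ⟨![i, j, k], sm3 hij hjk, ?_⟩
  intro a b
  fin_cases a <;> fin_cases b <;>
    simp only [fin3_mk2, Fin.mk_zero, Fin.mk_one, Fin.isValue, Matrix.cons_val_zero,
      Matrix.cons_val_one, Matrix.head_cons, Matrix.cons_val_two, Matrix.tail_cons]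
  · exact iff_of_false (by decide) (lt_irrefl _)
  · exact iff_of_false (by decide) (lt_asymm h1)
  · exact iff_of_false (by decide) (lt_asymm h3)
  · exact iff_of_true (by decide) h1
  · exact iff_of_false (by decide) (lt_irrefl _)
  · exact iff_of_false (by decide) (lt_asymm h2)
  · exact iff_of_true (by decide) h3
  · exact iff_of_true (by decide) h2
  · exact iff_of_false (by decide) (lt_irrefl _)

lemma avoid_iff {n : ℕ} (π : Equiv.Perm (Fin n)) :
    (Avoids π perm132 ∧ Avoids π perm321) ↔ Pc π := by
  constructor
  · rintro ⟨h132, h321⟩ i j k hij hjk hkj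
    have hik : i < k := lt_trans hij hjk
    constructor
    · by_contra h
      have h' : π i < π k := by
        rcases lt_trichotomy (π i) (π k) with h1 | h1 | h1
        · exact h1
        · exact absurd (π.injective h1) (ne_of_lt hik)
        · exact absurd h1 h
      exact h132 (contains132 π i j k hij hjk h' hkj)
    · by_contra h
      have h' : π j < π i := by
        rcases lt_trichotomy (π i) (π j) with h1 | h1 | h1
        · exact absurd h1 h
        · exact absurd (π.injective h1) (ne_of_lt hij)
        · exact h1
      exact h321 (contains321 π i j k hij hjk h' hkj)
  · intro hP
    constructor
    · rintro ⟨f, hf, hc⟩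
      have h02 : π (f 0) < π (f 2) := (hc 0 2).mp (by decide)
      have h21 : π (f 2) < π (f 1) := (hc 2 1).mp (by decide)
      have := hP (f 0) (f 1) (f 2) (hf (by decide)) (hf (by decide)) h21
      exact absurd h02 (not_lt.mpr (le_of_lt this.1))
    · rintro ⟨f, hf, hc⟩
      have h21 : π (f 2) < π (f 1) := (hc 2 1).mp (by decide)
      have h10 : π (f 1) < π (f 0) := (hc 1 0).mp (by decide)
      have := hP (f 0) (f 1) (f 2) (hf (by decide)) (hf (by decide)) h21
      exact absurd h10 (not_lt.mpr (le_of_lt this.2))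

/-- The permutation `[a, a+1, …, a+p−1, 0, 1, …, a−1, a+p, …, n−1]` in one-line notation. -/
def rotPerm (n a p : ℕ) (h : a + p ≤ n) : Equiv.Perm (Fin n) where
  toFun i := ⟨if (i : ℕ) < p then a + i else if (i : ℕ) < p + a then i - p else i, by
    have := i.isLt; split_ifs <;> omega⟩
  invFun v := ⟨if (v : ℕ) < a then v + p else if (v : ℕ) < a + p then v - a else v, by
    have := v.isLt; split_ifs <;> omega⟩
  left_inv i := by
    have := i.isLt; ext; simp only; split_ifs <;> omega
  right_inv v := by
    have := v.isLt; ext; simp only; split_ifs <;> omega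

lemma rotPerm_apply (n a p : ℕ) (h : a + p ≤ n) (i : Fin n) :
    (rotPerm n a p h i : ℕ) = if (i : ℕ) < p then a + i else if (i : ℕ) < p + a then i - p else i :=
  rfl

lemma rotPerm_symm_apply (n a p : ℕ) (h : a + p ≤ n) (v : Fin n) :
    ((rotPerm n a p h).symm v : ℕ)
      = if (v : ℕ) < a then v + p else if (v : ℕ) < a + p then v - a else v :=
  rfl

lemma Pc_one {n : ℕ} : Pc (1 : Equiv.Perm (Fin n)) := by
  intro i j k hij hjk hkj
  simp only [Equiv.Perm.coe_one, id_eq] at hkj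
  exact absurd hjk (not_lt.mpr (le_of_lt hkj))

lemma Pc_rotPerm (n a p : ℕ) (h : a + p ≤ n) (ha : 1 ≤ a) (hp : 1 ≤ p) :
    Pc (rotPerm n a p h) := by
  intro i j k hij hjk hkj
  rw [Fin.lt_def] at hij hjk hkj ⊢
  rw [Fin.lt_def]
  simp only [rotPerm_apply] at hkj ⊢
  have hi := i.isLt; have hj := j.isLt; have hk := k.isLt
  split_ifs at hkj ⊢ <;> omega

lemma fin_strictMono_le {n : ℕ} {f : Fin n → Fin n} (hf : StrictMono f) :
    ∀ m (hm : m < n), m ≤ (f ⟨m, hm⟩ : ℕ) := by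
  intro m
  induction m with
  | zero => intro hm; exact Nat.zero_le _
  | succ m ih =>
    intro hm
    have hm' : m < n := by omega
    have h1 := ih hm'
    have h2 : f ⟨m, hm'⟩ < f ⟨m + 1, hm⟩ := hf (Fin.mk_lt_mk.mpr (Nat.lt_succ_self m))
    rw [Fin.lt_def] at h2
    omega

lemma perm_eq_one_of_strictMono {n : ℕ} {π : Equiv.Perm (Fin n)} (h : StrictMono π) :
    π = 1 := by
  have hsymm : StrictMono π.symm := by
    intro x y hxy
    rcases lt_trichotomy (π.symm x) (π.symm y) with h1 | h1 | h1
    · exact h1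
    · exact absurd (π.symm.injective h1) (ne_of_lt hxy)
    · have := h h1
      simp only [Equiv.apply_symm_apply] at this
      exact absurd hxy (not_lt.mpr (le_of_lt this))
  ext i
  have h1' : (i : ℕ) ≤ (π i : ℕ) := fin_strictMono_le h (i : ℕ) i.isLt
  have h2' : ((π i : Fin n) : ℕ) ≤ (π.symm (π i) : ℕ) := fin_strictMono_le hsymm _ (π i).isLt
  rw [Equiv.symm_apply_apply] at h2'
  exact congrArg Fin.val (le_antisymm h2' h1')

lemma structure_of_Pc {n : ℕ} (π : Equiv.Perm (Fin n)) (hP : Pc π) :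
    π = 1 ∨ ∃ a p, ∃ (h : a + p ≤ n), 1 ≤ a ∧ 1 ≤ p ∧ π = rotPerm n a p h := by
  by_cases hone : π = 1
  · exact Or.inl hone
  right
  have hn0 : 0 < n := by
    rcases Nat.eq_zero_or_pos n with h | h
    · subst h; exact absurd (Equiv.ext fun i => absurd i.2 (Nat.not_lt_zero _)) hone
    · exact h
  set V : ℕ → ℕ := fun m => if hm : m < n then (π ⟨m, hm⟩ : ℕ) else 0 with hVdef
  have Vdef : ∀ m (hm : m < n), V m = (π ⟨m, hm⟩ : ℕ) := fun m hm => dif_pos hm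
  have Vlt : ∀ m, m < n → V m < n := by
    intro m hm; rw [Vdef m hm]; exact (π ⟨m, hm⟩).isLt
  have Vinj : ∀ i j, i < n → j < n → V i = V j → i = j := by
    intro i j hi hj h
    rw [Vdef i hi, Vdef j hj] at h
    exact congrArg Fin.val (π.injective (Fin.val_injective h))
  have posOf : ∀ w, w < n → ∃ k, ∃ _ : k < n, V k = w := by
    intro w hw
    refine ⟨(π.symm ⟨w, hw⟩ : ℕ), (π.symm ⟨w, hw⟩).isLt, ?_⟩
    rw [Vdef _ (π.symm ⟨w, hw⟩).isLt]
    have heta : (⟨((π.symm ⟨w, hw⟩ : Fin n) : ℕ), (π.symm ⟨w, hw⟩).isLt⟩ : Fin n)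
        = π.symm ⟨w, hw⟩ := rfl
    rw [heta, Equiv.apply_symm_apply]
  have PV : ∀ i j k, ∀ _ : k < n, i < j → j < k → V k < V j → V k < V i ∧ V i < V j := by
    intro i j k hk hij hjk h
    have hj : j < n := lt_trans hjk hk
    have hi : i < n := lt_trans hij hj
    rw [Vdef k hk, Vdef j hj] at h
    rw [Vdef i hi, Vdef j hj, Vdef k hk]
    exact hP ⟨i, hi⟩ ⟨j, hj⟩ ⟨k, hk⟩ hij hjk h
  obtain ⟨p, hpn, hVp⟩ := posOf 0 hn0
  have hp1 : 1 ≤ p := by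
    by_contra hc
    have hp0 : V 0 = 0 := by rwa [(by omega : p = 0)] at hVp
    refine hone (perm_eq_one_of_strictMono ?_)
    intro u v huv
    by_contra hc2
    have hvu : (π v : ℕ) < (π u : ℕ) := by
      rcases lt_trichotomy (π u : ℕ) (π v : ℕ) with h | h | h
      · exact absurd (Fin.lt_def.mpr h) hc2
      · exact absurd (π.injective (Fin.val_injective h)) (ne_of_lt huv)
      · exact h
    have hVu : V (u : ℕ) = (π u : ℕ) := Vdef (u : ℕ) u.isLt
    have hVv : V (v : ℕ) = (π v : ℕ) := Vdef (v : ℕ) v.isLt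
    have huvn : (u : ℕ) < (v : ℕ) := huv
    rcases Nat.eq_zero_or_pos (u : ℕ) with hu0 | hu0
    · rw [hu0] at hVu; omega
    · have := (PV 0 (u : ℕ) (v : ℕ) v.isLt hu0 huvn (by omega)).1
      omega
  have ha1 : 1 ≤ V 0 := by
    by_contra hc
    have : (0 : ℕ) = p := Vinj 0 p hn0 hpn (by omega)
    omega
  have A : ∀ i j, i < j → j < p → V i < V j := by
    intro i j hij hjp
    have hjn : j < n := lt_trans hjp hpn
    have hVj0 : V j ≠ 0 := by
      intro h0
      have : j = p := Vinj j p hjn hpn (by omega)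
      omega
    exact (PV i j p hpn hij hjp (by omega)).2
  have B : ∀ j k, p ≤ j → j < k → k < n → V j < V k := by
    intro j k hpj hjk hkn
    by_contra hc
    have hne : V j ≠ V k := fun h => absurd (Vinj j k (lt_trans hjk hkn) hkn h) (ne_of_lt hjk)
    rcases Nat.eq_or_lt_of_le hpj with hpe | hpl
    · have : V j = 0 := hpe ▸ hVp
      omega
    · have := (PV p j k hkn hpl hjk (by omega)).1
      omega
  have C2 : ∀ i, i < p → V i = V 0 + i := by
    intro i
    induction i with
    | zero => intro _; omega
    | succ i ih =>
      intro h
      have hiv := ih (by omega)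
      have hin1 : i + 1 < n := lt_trans h hpn
      have hgt : V 0 + i < V (i + 1) := by
        have := A i (i + 1) (by omega) h
        omega
      by_contra hc
      have hwn : V 0 + i + 1 < n := by
        have := Vlt (i + 1) hin1
        omega
      obtain ⟨k, hkn, hVk⟩ := posOf (V 0 + i + 1) hwn
      rcases lt_trichotomy k p with hkp | hkp | hkp
      · rcases lt_trichotomy k (i + 1) with h1 | h1 | h1
        · rcases Nat.lt_succ_iff_lt_or_eq.mp h1 with h2 | h2
          · have := A k i h2 (by omega)
            omega
          · rw [h2] at hVk; omega
        · rw [h1] at hVk; omega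
        · have := A (i + 1) k h1 hkp
          omega
      · rw [hkp] at hVk; omega
      · have := (PV 0 (i + 1) k hkn (by omega) (by omega) (by omega)).1
        omega
  have han : V 0 + p ≤ n := by
    have h1 := C2 (p - 1) (by omega)
    have h2 := Vlt (p - 1) (by omega)
    omega
  have C4 : ∀ t, t < V 0 → V (p + t) = t := by
    intro t
    induction t with
    | zero => intro _; rw [Nat.add_zero]; exact hVp
    | succ t ih =>
      intro ht
      have hiv := ih (by omega)
      have hn1 : p + t + 1 < n := by omega
      have hgt : t < V (p + t + 1) := by
        have := B (p + t) (p + t + 1) (by omega) (by omega) hn1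
        omega
      show V (p + t + 1) = t + 1
      by_contra hc
      obtain ⟨k, hkn, hVk⟩ := posOf (t + 1) (by omega)
      rcases lt_trichotomy k p with h1 | h1 | h1
      · have := C2 k h1
        omega
      · rw [h1] at hVk; omega
      · rcases lt_trichotomy k (p + t) with h2 | h2 | h2
        · have := B k (p + t) (by omega) h2 (by omega)
          omega
        · rw [h2] at hVk; omega
        · rcases lt_trichotomy k (p + t + 1) with h3 | h3 | h3
          · omega
          · rw [h3] at hVk; omega
          · have := B (p + t + 1) k (by omega) h3 hkn
            omega
  have C5a : ∀ d i, i < n → p ≤ i → n - i ≤ d + 1 → V i ≤ i := by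
    intro d
    induction d with
    | zero =>
      intro i hi _ hni
      have := Vlt i hi
      omega
    | succ d ih =>
      intro i hi hpi hni
      rcases Nat.lt_or_ge (n - i) (d + 2) with h | h
      · exact ih i hi hpi (by omega)
      · have hi1 : i + 1 < n := by omega
        have h1 := B i (i + 1) hpi (by omega) hi1
        have h2 := ih (i + 1) hi1 (by omega) (by omega)
        omega
  have C5b : ∀ t, p + V 0 + t < n → p + V 0 + t ≤ V (p + V 0 + t) := by
    intro t
    induction t with
    | zero =>
      intro h
      show p + V 0 ≤ V (p + V 0 + 0)
      rw [Nat.add_zero] at h ⊢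
      have hmax : V 0 - 1 < V (p + V 0) := by
        have h1 := C4 (V 0 - 1) (by omega)
        have h2 := B (p + (V 0 - 1)) (p + V 0) (by omega) (by omega) h
        omega
      by_contra hc
      have h2 : V (p + V 0) - V 0 < p := by omega
      have h3 := C2 (V (p + V 0) - V 0) h2
      have h4 : V (p + V 0) - V 0 = p + V 0 :=
        Vinj _ _ (by omega) h (by omega)
      omega
    | succ t ih =>
      intro h
      have h0 : p + V 0 + t < n := by omega
      have h1 := ih h0
      have h2 := B (p + V 0 + t) (p + V 0 + t + 1) (by omega) (by omega) (by omega)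
      have h3 : p + V 0 + (t + 1) = p + V 0 + t + 1 := rfl
      rw [h3]
      omega
  refine ⟨V 0, p, by omega, ha1, hp1, ?_⟩
  ext i
  have hi := i.isLt
  rw [rotPerm_apply]
  have hVi : V (i : ℕ) = (π i : ℕ) := Vdef (i : ℕ) i.isLt
  rcases Nat.lt_or_ge (i : ℕ) p with h1 | h1
  · rw [if_pos h1]
    have := C2 (i : ℕ) h1
    omega
  · rcases Nat.lt_or_ge (i : ℕ) (p + V 0) with h2 | h2
    · rw [if_neg (by omega), if_pos h2]
      have h3 := C4 ((i : ℕ) - p) (by omega)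
      rw [show p + ((i : ℕ) - p) = (i : ℕ) by omega] at h3
      omega
    · rw [if_neg (by omega), if_neg (by omega)]
      have h3 := C5a n (i : ℕ) hi (by omega) (by omega)
      have h4 := C5b ((i : ℕ) - (p + V 0)) (by omega)
      rw [show p + V 0 + ((i : ℕ) - (p + V 0)) = (i : ℕ) by omega] at h4
      omega

lemma bdes_one' {n : ℕ} : bdes (1 : Equiv.Perm (Fin n)) = 0 := by
  rw [bdes, Finset.card_eq_zero, Finset.filter_eq_empty_iff]
  rintro k - ⟨h1, h2⟩
  simp only [Equiv.Perm.coe_one, id_eq] at h2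
  omega

lemma bdes_rotPerm (n a p : ℕ) (h : a + p ≤ n) (ha : 1 ≤ a) (hp : 1 ≤ p) :
    bdes (rotPerm n a p h) = if 3 ≤ a + p then 1 else 0 := by
  rw [bdes]
  have hset : ((Finset.range n).filter fun k =>
      ∃ hk : k + 1 < n, ((rotPerm n a p h) ⟨k + 1, hk⟩ : ℕ) + 1
        < ((rotPerm n a p h) ⟨k, Nat.lt_of_succ_lt hk⟩ : ℕ))
      = if 3 ≤ a + p then {p - 1} else ∅ := by
    split_ifs with h3
    · ext k
      simp only [Finset.mem_filter, Finset.mem_range, Finset.mem_singleton, rotPerm_apply,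
        exists_prop]
      constructor
      · rintro ⟨hkn, hk1, harith⟩
        split_ifs at harith <;> omega
      · rintro rfl
        refine ⟨by omega, by omega, ?_⟩
        split_ifs <;> omega
    · ext k
      simp only [Finset.mem_filter, Finset.mem_range, Finset.notMem_empty, iff_false,
        not_and, rotPerm_apply, exists_prop, not_exists]
      intro hkn hk1 harith
      split_ifs at harith <;> omega
  rw [hset]
  split_ifs <;> simp

lemma card_pairs (n : ℕ) :
    (((Finset.range (n + 1)) ×ˢ (Finset.range (n + 1))).filter
      fun x : ℕ × ℕ => 1 ≤ x.1 ∧ 1 ≤ x.2 ∧ x.1 + x.2 ≤ n).card = n.choose 2 := by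
  induction n with
  | zero => decide
  | succ n ih =>
    have hsplit : (((Finset.range (n + 2)) ×ˢ (Finset.range (n + 2))).filter
        fun x : ℕ × ℕ => 1 ≤ x.1 ∧ 1 ≤ x.2 ∧ x.1 + x.2 ≤ n + 1)
        = (((Finset.range (n + 1)) ×ˢ (Finset.range (n + 1))).filter
            fun x : ℕ × ℕ => 1 ≤ x.1 ∧ 1 ≤ x.2 ∧ x.1 + x.2 ≤ n)
          ∪ ((Finset.Icc 1 n).image fun a => (a, n + 1 - a)) := by
      ext x
      simp only [Finset.mem_filter, Finset.mem_union, Finset.mem_product, Finset.mem_range,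
        Finset.mem_image, Finset.mem_Icc, Prod.ext_iff]
      constructor
      · rintro ⟨⟨hx1, hx2⟩, h1, h2, h3⟩
        rcases Nat.lt_or_ge (x.1 + x.2) (n + 1) with h | h
        · exact Or.inl ⟨⟨by omega, by omega⟩, h1, h2, by omega⟩
        · exact Or.inr ⟨x.1, ⟨by omega, by omega⟩, by omega, by omega⟩
      · rintro (⟨⟨hx1, hx2⟩, h1, h2, h3⟩ | ⟨a, ⟨ha1, ha2⟩, he1, he2⟩)
        · exact ⟨⟨by omega, by omega⟩, h1, h2, by omega⟩
        · exact ⟨⟨by omega, by omega⟩, by omega, by omega, by omega⟩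
    rw [hsplit, Finset.card_union_of_disjoint, ih,
      Finset.card_image_of_injective _ (fun a b hab => (Prod.ext_iff.mp hab).1),
      Nat.card_Icc]
    · have hch : (n + 1).choose 2 = n.choose 1 + n.choose 2 := Nat.choose_succ_succ n 1
      rw [hch, Nat.choose_one_right]
      omega
    · rw [Finset.disjoint_left]
      rintro x hx hx2
      simp only [Finset.mem_filter, Finset.mem_product, Finset.mem_range] at hx
      simp only [Finset.mem_image, Finset.mem_Icc, Prod.ext_iff] at hx2
      obtain ⟨a, ⟨ha1, ha2⟩, he1, he2⟩ := hx2
      omega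

/-- For `n ≥ 2`: among permutations of length `n` avoiding both 132 and 321, exactly `2`
have no big descents, exactly `C(n,2) − 1` have one big descent, and none have two or more. -/
theorem bdes_distribution_avoids132_321 (n : ℕ) (hn : 2 ≤ n) :
    Nat.card {π : Equiv.Perm (Fin n) // (Avoids π perm132 ∧ Avoids π perm321) ∧ bdes π = 0} = 2 ∧
    Nat.card {π : Equiv.Perm (Fin n) // (Avoids π perm132 ∧ Avoids π perm321) ∧ bdes π = 1} =
      Nat.choose n 2 - 1 ∧
    ∀ k, 2 ≤ k →
      Nat.card {π : Equiv.Perm (Fin n) // (Avoids π perm132 ∧ Avoids π perm321) ∧ bdes π = k}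
        = 0 := by
  have hn0 : 0 < n := by omega
  have key : ∀ π : Equiv.Perm (Fin n), (Avoids π perm132 ∧ Avoids π perm321) ↔
      (π = 1 ∨ ∃ a p, ∃ h : a + p ≤ n, 1 ≤ a ∧ 1 ≤ p ∧ π = rotPerm n a p h) := by
    intro π
    rw [avoid_iff]
    constructor
    · exact structure_of_Pc π
    · rintro (rfl | ⟨a, p, h, ha, hp, rfl⟩)
      · exact Pc_one
      · exact Pc_rotPerm n a p h ha hp
  refine ⟨?_, ?_, ?_⟩
  · -- bdes = 0 : exactly the identity and rotPerm 1 1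
    rw [Nat.card_eq_fintype_card, Fintype.card_subtype]
    have hfe : (Finset.univ.filter fun π : Equiv.Perm (Fin n) =>
        (Avoids π perm132 ∧ Avoids π perm321) ∧ bdes π = 0)
        = {1, rotPerm n 1 1 (by omega)} := by
      ext π
      simp only [Finset.mem_filter, Finset.mem_univ, true_and, Finset.mem_insert,
        Finset.mem_singleton]
      constructor
      · rintro ⟨hav, hb⟩
        rcases (key π).mp hav with rfl | ⟨a, p, h, ha, hp, rfl⟩
        · exact Or.inl rfl
        · right
          rw [bdes_rotPerm n a p h ha hp] at hb
          have hap : a = 1 ∧ p = 1 := by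
            rcases Nat.lt_or_ge (a + p) 3 with hl | hl
            · omega
            · rw [if_pos hl] at hb; omega
          obtain ⟨ha1, hp1⟩ := hap
          subst ha1; subst hp1
          rfl
      · rintro (rfl | rfl)
        · exact ⟨(key 1).mpr (Or.inl rfl), bdes_one'⟩
        · refine ⟨(key _).mpr (Or.inr ⟨1, 1, by omega, le_rfl, le_rfl, rfl⟩), ?_⟩
          rw [bdes_rotPerm n 1 1 (by omega) le_rfl le_rfl]
          norm_num
    rw [hfe, Finset.card_insert_of_notMem, Finset.card_singleton]
    simp only [Finset.mem_singleton]
    intro heq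
    have h0 := congrArg (fun e : Equiv.Perm (Fin n) => (e ⟨0, hn0⟩ : ℕ)) heq
    simp only [Equiv.Perm.coe_one, id_eq, rotPerm_apply] at h0
    norm_num at h0
  · -- bdes = 1
    rw [Nat.card_eq_fintype_card, Fintype.card_subtype]
    have hfe : (Finset.univ.filter fun π : Equiv.Perm (Fin n) =>
        (Avoids π perm132 ∧ Avoids π perm321) ∧ bdes π = 1)
        = (((Finset.range (n + 1)) ×ˢ (Finset.range (n + 1))).filter
            fun x : ℕ × ℕ => 1 ≤ x.1 ∧ 1 ≤ x.2 ∧ x.1 + x.2 ≤ n ∧ 3 ≤ x.1 + x.2).image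
            (fun x : ℕ × ℕ => if hx : x.1 + x.2 ≤ n then rotPerm n x.1 x.2 hx else 1) := by
      ext π
      simp only [Finset.mem_filter, Finset.mem_univ, true_and, Finset.mem_image,
        Finset.mem_product, Finset.mem_range]
      constructor
      · rintro ⟨hav, hb⟩
        rcases (key π).mp hav with rfl | ⟨a, p, h, ha, hp, rfl⟩
        · rw [bdes_one'] at hb; exact absurd hb zero_ne_one
        · rw [bdes_rotPerm n a p h ha hp] at hb
          have h3 : 3 ≤ a + p := by
            by_contra h3
            rw [if_neg h3] at hb
            exact absurd hb zero_ne_one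
          refine ⟨(a, p), ⟨⟨by omega, by omega⟩, ha, hp, h, h3⟩, ?_⟩
          exact dif_pos h
      · rintro ⟨x, ⟨⟨hx1, hx2⟩, h1, h2, h3, h4⟩, heq⟩
        rw [dif_pos h3] at heq
        subst heq
        refine ⟨(key _).mpr (Or.inr ⟨x.1, x.2, h3, h1, h2, rfl⟩), ?_⟩
        rw [bdes_rotPerm n x.1 x.2 h3 h1 h2, if_pos h4]
    rw [hfe, Finset.card_image_of_injOn]
    · -- card of the parameter set
      have hers : (((Finset.range (n + 1)) ×ˢ (Finset.range (n + 1))).filter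
          fun x : ℕ × ℕ => 1 ≤ x.1 ∧ 1 ≤ x.2 ∧ x.1 + x.2 ≤ n ∧ 3 ≤ x.1 + x.2)
          = (((Finset.range (n + 1)) ×ˢ (Finset.range (n + 1))).filter
            fun x : ℕ × ℕ => 1 ≤ x.1 ∧ 1 ≤ x.2 ∧ x.1 + x.2 ≤ n).erase (1, 1) := by
        ext x
        simp only [Finset.mem_filter, Finset.mem_erase, Finset.mem_product, Finset.mem_range,
          Ne, Prod.ext_iff]
        constructor
        · rintro ⟨⟨hx1, hx2⟩, h1, h2, h3, h4⟩
          exact ⟨by omega, ⟨hx1, hx2⟩, h1, h2, h3⟩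
        · rintro ⟨hne, ⟨hx1, hx2⟩, h1, h2, h3⟩
          refine ⟨⟨hx1, hx2⟩, h1, h2, h3, by omega⟩
      rw [hers, Finset.card_erase_of_mem, card_pairs]
      simp only [Finset.mem_filter, Finset.mem_product, Finset.mem_range]
      exact ⟨⟨by omega, by omega⟩, le_rfl, le_rfl, by omega⟩
    · -- injectivity on the parameter set
      intro x hx y hy heq
      simp only [Finset.coe_filter, Finset.mem_product, Finset.mem_range, Set.mem_setOf_eq]
        at hx hy
      obtain ⟨⟨hx1, hx2⟩, hxa, hxp, hxn, hx3⟩ := hx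
      obtain ⟨⟨hy1, hy2⟩, hya, hyp, hyn, hy3⟩ := hy
      dsimp only at heq
      rw [dif_pos hxn, dif_pos hyn] at heq
      have ea : x.1 = y.1 := by
        have h0 := congrArg (fun e : Equiv.Perm (Fin n) => (e ⟨0, hn0⟩ : ℕ)) heq
        simp only [rotPerm_apply] at h0
        split_ifs at h0 <;> omega
      have ep : x.2 = y.2 := by
        have h0 := congrArg (fun e : Equiv.Perm (Fin n) => ((Equiv.symm e) ⟨0, hn0⟩ : ℕ)) heq
        simp only [rotPerm_symm_apply] at h0
        split_ifs at h0 <;> omega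
      exact Prod.ext ea ep
  · -- bdes ≥ 2 : impossible
    intro k hk
    rw [Nat.card_eq_fintype_card, Fintype.card_eq_zero_iff]
    refine ⟨fun x => ?_⟩
    obtain ⟨π, hav, hb⟩ := x
    rcases (key π).mp hav with rfl | ⟨a, p, h, ha, hp, rfl⟩
    · rw [bdes_one'] at hb; omega
    · rw [bdes_rotPerm n a p h ha hp] at hb
      split_ifs at hb <;> omega
end

section
/- For all n ≥ 1: every permutation in S_n({231,312}) has no big descents, and the number of permutations in S_n({231,312}) is 2^{n−1}; that is, b_{n,0}({231,312}) = 2^{n−1} and b_{n,k}({231,312}) = 0 for all k ≥ 1. -/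
open scoped Classical

namespace BD

variable {n : ℕ}

/-- one-line notation as a ℕ-valued function with junk value `n` off-range -/
def p (π : Equiv.Perm (Fin n)) (t : ℕ) : ℕ :=
  if h : t < n then (π ⟨t, h⟩ : ℕ) else n

lemma p_eq (π : Equiv.Perm (Fin n)) {t : ℕ} (h : t < n) : p π t = (π ⟨t, h⟩ : ℕ) := dif_pos h

lemma p_lt (π : Equiv.Perm (Fin n)) {t : ℕ} (h : t < n) : p π t < n := by
  rw [p_eq π h]; exact (π ⟨t, h⟩).2

lemma p_inj (π : Equiv.Perm (Fin n)) {s t : ℕ} (hs : s < n) (ht : t < n)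
    (h : p π s = p π t) : s = t := by
  rw [p_eq π hs, p_eq π ht] at h
  have := π.injective (Fin.val_injective h)
  exact congrArg Fin.val this

def BFree (π : Equiv.Perm (Fin n)) : Prop := ∀ t, t + 1 < n → p π t ≤ p π (t + 1) + 1

lemma bdes_eq_zero_iff (π : Equiv.Perm (Fin n)) : bdes π = 0 ↔ BFree π := by
  rw [bdes, Finset.card_eq_zero, Finset.filter_eq_empty_iff]
  constructor
  · intro h t ht
    have := h (Finset.mem_range.mpr (Nat.lt_of_succ_lt ht))
    push_neg at this
    have h2 := this ht
    rw [p_eq π (Nat.lt_of_succ_lt ht), p_eq π ht]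
    omega
  · intro h k _
    rintro ⟨hk, hlt⟩
    have := h k hk
    rw [p_eq π (Nat.lt_of_succ_lt hk), p_eq π hk] at this
    omega

lemma cross' (π : Equiv.Perm (Fin n)) (hB : BFree π) {v : ℕ} :
    ∀ d i, i + d + 1 < n → v < p π i → p π (i + d + 1) < v →
    (∀ t, i ≤ t → t ≤ i + d + 1 → p π t ≠ v) → False := by
  intro d
  induction d with
  | zero =>
    intro i hn hiv hjv _
    simp only [Nat.add_zero] at *
    have := hB i hn
    omega
  | succ d ih =>
    intro i hn hiv hjv hv
    have h1 : i + 1 < n := by omega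
    have hstep := hB i (by omega)
    have hne : p π (i + 1) ≠ v := hv (i + 1) (by omega) (by omega)
    have : v < p π (i + 1) := by omega
    exact ih (i + 1) (by omega) this (by
      have : i + 1 + d + 1 = i + (d + 1) + 1 := by omega
      rw [this]; exact hjv)
      (fun t ht1 ht2 => hv t (by omega) (by omega))

/-- cross lemma in usable form -/
lemma cross_lemma (π : Equiv.Perm (Fin n)) (hB : BFree π) {i j v : ℕ} (hij : i < j) (hj : j < n)
    (hiv : v < p π i) (hjv : p π j < v) (hv : ∀ t, i ≤ t → t ≤ j → p π t ≠ v) : False := by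
  obtain ⟨d, rfl⟩ : ∃ d, j = i + d + 1 := ⟨j - i - 1, by omega⟩
  exact cross' π hB d i hj hiv hjv hv

end BD

namespace BD
variable {n : ℕ}

lemma p_val (π : Equiv.Perm (Fin n)) (t : Fin n) : p π (t : ℕ) = (π t : ℕ) := by
  rw [p_eq π t.2]

lemma build231 (π : Equiv.Perm (Fin n)) {i j k : Fin n} (hij : i < j) (hjk : j < k)
    (h1 : (π k : ℕ) < (π i : ℕ)) (h2 : (π i : ℕ) < (π j : ℕ)) : Contains π perm231 := by
  refine ⟨![i, j, k], ?_, ?_⟩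
  · intro a b hab
    fin_cases a <;> fin_cases b <;>
      first
        | exact absurd hab (by decide)
        | exact hij
        | exact hjk
        | exact lt_trans hij hjk
  · intro a b
    fin_cases a <;> fin_cases b
    · exact iff_of_false (by decide) (lt_irrefl _)
    · exact iff_of_true (by decide) (by rw [Fin.lt_def]; show (π i : ℕ) < (π j : ℕ); omega)
    · exact iff_of_false (by decide) (by rw [Fin.lt_def]; show ¬ (π i : ℕ) < (π k : ℕ); omega)
    · exact iff_of_false (by decide) (by rw [Fin.lt_def]; show ¬ (π j : ℕ) < (π i : ℕ); omega)
    · exact iff_of_false (by decide) (lt_irrefl _)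
    · exact iff_of_false (by decide) (by rw [Fin.lt_def]; show ¬ (π j : ℕ) < (π k : ℕ); omega)
    · exact iff_of_true (by decide) (by rw [Fin.lt_def]; show (π k : ℕ) < (π i : ℕ); omega)
    · exact iff_of_true (by decide) (by rw [Fin.lt_def]; show (π k : ℕ) < (π j : ℕ); omega)
    · exact iff_of_false (by decide) (lt_irrefl _)

lemma build312 (π : Equiv.Perm (Fin n)) {i j k : Fin n} (hij : i < j) (hjk : j < k)
    (h1 : (π j : ℕ) < (π k : ℕ)) (h2 : (π k : ℕ) < (π i : ℕ)) : Contains π perm312 := by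
  refine ⟨![i, j, k], ?_, ?_⟩
  · intro a b hab
    fin_cases a <;> fin_cases b <;>
      first
        | exact absurd hab (by decide)
        | exact hij
        | exact hjk
        | exact lt_trans hij hjk
  · intro a b
    fin_cases a <;> fin_cases b
    -- perm312 one-line : 2 0 1.  values: π i high, π j low, π k mid
    · exact iff_of_false (by decide) (lt_irrefl _)
    · exact iff_of_false (by decide) (by rw [Fin.lt_def]; show ¬ (π i : ℕ) < (π j : ℕ); omega)
    · exact iff_of_false (by decide) (by rw [Fin.lt_def]; show ¬ (π i : ℕ) < (π k : ℕ); omega)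
    · exact iff_of_true (by decide) (by rw [Fin.lt_def]; show (π j : ℕ) < (π i : ℕ); omega)
    · exact iff_of_false (by decide) (lt_irrefl _)
    · exact iff_of_true (by decide) (by rw [Fin.lt_def]; show (π j : ℕ) < (π k : ℕ); omega)
    · exact iff_of_true (by decide) (by rw [Fin.lt_def]; show (π k : ℕ) < (π i : ℕ); omega)
    · exact iff_of_false (by decide) (by rw [Fin.lt_def]; show ¬ (π k : ℕ) < (π j : ℕ); omega)
    · exact iff_of_false (by decide) (lt_irrefl _)

lemma avoids_bfree (π : Equiv.Perm (Fin n)) (h1 : Avoids π perm231) (h2 : Avoids π perm312) :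
    BFree π := by
  by_contra hB
  unfold BFree at hB
  push_neg at hB
  obtain ⟨t, ht, hbig'⟩ := hB
  have hbig : p π (t + 1) + 1 < p π t := by omega
  have htn : t < n := Nat.lt_of_succ_lt ht
  have hbn : p π t < n := p_lt π htn
  have hcn : p π (t + 1) + 1 < n := by omega
  obtain ⟨sf, hsf⟩ : ∃ sf : Fin n, (π sf : ℕ) = p π (t + 1) + 1 :=
    ⟨π.symm ⟨_, hcn⟩, by simp⟩
  have hps : p π (sf : ℕ) = p π (t + 1) + 1 := by rw [p_val]; exact hsf
  have hst : (sf : ℕ) ≠ t := by intro h; rw [h] at hps; omega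
  have hst1 : (sf : ℕ) ≠ t + 1 := by intro h; rw [h] at hps; omega
  rcases lt_or_gt_of_ne hst with hlt | hgt
  · refine h1 (build231 π (i := sf) (j := ⟨t, htn⟩) (k := ⟨t + 1, ht⟩) ?_ ?_ ?_ ?_)
    · exact Fin.lt_def.mpr hlt
    · exact Fin.mk_lt_mk.mpr (Nat.lt_succ_self t)
    · rw [hsf, ← p_eq π ht]; omega
    · rw [hsf, ← p_eq π htn]; omega
  · refine h2 (build312 π (i := ⟨t, htn⟩) (j := ⟨t + 1, ht⟩) (k := sf) ?_ ?_ ?_ ?_)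
    · exact Fin.mk_lt_mk.mpr (Nat.lt_succ_self t)
    · exact Fin.lt_def.mpr (by show t + 1 < (sf : ℕ); omega)
    · rw [hsf, ← p_eq π ht]; omega
    · rw [hsf, ← p_eq π htn]; omega

lemma bfree_avoids231 (π : Equiv.Perm (Fin n)) (hB : BFree π) : Avoids π perm231 := by
  rintro ⟨f, hf, hcond⟩
  have h12 : f 1 < f 2 := hf (by decide)
  have hA : (π (f 0) : ℕ) < (π (f 1) : ℕ) := (hcond 0 1).mp (by decide)
  have hC : (π (f 2) : ℕ) < (π (f 0) : ℕ) := (hcond 2 0).mp (by decide)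
  refine cross_lemma π hB (i := (f 1 : ℕ)) (j := (f 2 : ℕ)) (v := (π (f 0) : ℕ))
    h12 (f 2).2 ?_ ?_ ?_
  · rw [p_val]; exact hA
  · rw [p_val]; exact hC
  · intro u hu1 hu2 heq
    have hun : u < n := lt_of_le_of_lt hu2 (f 2).2
    have h01 : f 0 < f 1 := hf (by decide)
    have : u = ((f 0 : Fin n) : ℕ) := p_inj π hun (f 0).2 (by rw [heq, p_val])
    have h01' : ((f 0 : Fin n) : ℕ) < ((f 1 : Fin n) : ℕ) := h01
    omega

lemma bfree_avoids312 (π : Equiv.Perm (Fin n)) (hB : BFree π) : Avoids π perm312 := by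
  rintro ⟨f, hf, hcond⟩
  have h01 : f 0 < f 1 := hf (by decide)
  have hA : (π (f 1) : ℕ) < (π (f 2) : ℕ) := (hcond 1 2).mp (by decide)
  have hC : (π (f 2) : ℕ) < (π (f 0) : ℕ) := (hcond 2 0).mp (by decide)
  refine cross_lemma π hB (i := (f 0 : ℕ)) (j := (f 1 : ℕ)) (v := (π (f 2) : ℕ))
    h01 (f 1).2 ?_ ?_ ?_
  · rw [p_val]; exact hC
  · rw [p_val]; exact hA
  · intro u hu1 hu2 heq
    have hun : u < n := lt_of_le_of_lt hu2 (f 1).2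
    have h12 : f 1 < f 2 := hf (by decide)
    have : u = ((f 2 : Fin n) : ℕ) := p_inj π hun (f 2).2 (by rw [heq, p_val])
    have h12' : ((f 1 : Fin n) : ℕ) < ((f 2 : Fin n) : ℕ) := h12
    omega

end BD

namespace BD
variable {n : ℕ}

/-! ### Construction of the permutation with a given descent pattern -/

def gD (D : ℕ → Bool) : ℕ → ℕ
  | 0 => 0
  | i + 1 => if D i then gD D i + 1 else 0

def ED (n : ℕ) (D : ℕ → Bool) (i : ℕ) : Prop := i + 1 < n ∧ D i = true

instance EDdec (n : ℕ) (D : ℕ → Bool) : DecidablePred (ED n D) := fun _ =>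
  instDecidableAnd

lemma ED_ex (n : ℕ) (D : ℕ → Bool) (i : ℕ) : ∃ m, ¬ ED n D (i + m) :=
  ⟨n, fun h => by have := h.1; omega⟩

noncomputable def fD (n : ℕ) (D : ℕ → Bool) (i : ℕ) : ℕ := Nat.find (ED_ex n D i)

lemma fD_spec (n : ℕ) (D : ℕ → Bool) (i : ℕ) : ¬ ED n D (i + fD n D i) :=
  Nat.find_spec (ED_ex n D i)

lemma fD_min {D : ℕ → Bool} {i m : ℕ} (h : m < fD n D i) : ED n D (i + m) :=
  of_not_not (Nat.find_min (ED_ex n D i) h)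

lemma fD_le {D : ℕ → Bool} {i m : ℕ} (h : ¬ ED n D (i + m)) : fD n D i ≤ m :=
  Nat.find_le h

lemma le_fD {D : ℕ → Bool} {i m0 : ℕ} (h : ∀ m, m < m0 → ED n D (i + m)) :
    m0 ≤ fD n D i := by
  by_contra hc
  push_neg at hc
  exact fD_spec n D i (h _ hc)

lemma fD_pos {D : ℕ → Bool} {i : ℕ} (h : ED n D i) : 0 < fD n D i := by
  rcases Nat.eq_zero_or_pos (fD n D i) with h0 | h0
  · have := fD_spec n D i
    rw [h0] at this
    exact absurd h this
  · exact h0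

lemma fD_zero {D : ℕ → Bool} {i : ℕ} (h : ¬ ED n D i) : fD n D i = 0 :=
  Nat.le_zero.mp (fD_le (m := 0) h)

lemma fD_succ {D : ℕ → Bool} {i : ℕ} (h : ED n D i) : fD n D (i + 1) = fD n D i - 1 := by
  have hpos : 0 < fD n D i := fD_pos h
  apply le_antisymm
  · apply fD_le
    rw [show i + 1 + (fD n D i - 1) = i + fD n D i by omega]
    exact fD_spec n D i
  · apply le_fD
    intro m hm
    rw [show i + 1 + m = i + (m + 1) by omega]
    exact fD_min (by omega)

lemma kD_lt {D : ℕ → Bool} {i : ℕ} (hi : i < n) : i + fD n D i < n := by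
  rcases Nat.eq_zero_or_pos (fD n D i) with h0 | h0
  · omega
  · have := (fD_min (show fD n D i - 1 < fD n D i by omega)).1
    omega

lemma gD_le (D : ℕ → Bool) : ∀ i, gD D i ≤ i := by
  intro i
  induction i with
  | zero => simp [gD]
  | succ i ih =>
    by_cases hDi : D i
    · have : gD D (i + 1) = gD D i + 1 := by simp [gD, hDi]
      omega
    · have : gD D (i + 1) = 0 := by simp [gD, hDi]
      omega

lemma desc_of_block (D : ℕ → Bool) : ∀ i s, i - gD D i ≤ s → s < i → D s = true := by
  intro i
  induction i with
  | zero => omega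
  | succ i ih =>
    intro s h1 h2
    by_cases hDi : D i
    · have hg : gD D (i + 1) = gD D i + 1 := by simp [gD, hDi]
      have hgl := gD_le D i
      rcases Nat.lt_or_ge s i with h | h
      · exact ih s (by omega) h
      · have : s = i := by omega
        rw [this]; exact hDi
    · have hg : gD D (i + 1) = 0 := by simp [gD, hDi]
      omega

lemma block_start (D : ℕ → Bool) :
    ∀ i, i - gD D i = 0 ∨ (0 < i - gD D i ∧ D (i - gD D i - 1) = false) := by
  intro i
  induction i with
  | zero => left; rfl
  | succ i ih =>
    by_cases hDi : D i
    · have hg : gD D (i + 1) = gD D i + 1 := by simp [gD, hDi]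
      have hgl := gD_le D i
      have he : (i + 1) - gD D (i + 1) = i - gD D i := by omega
      rw [he]; exact ih
    · have hg : gD D (i + 1) = 0 := by simp [gD, hDi]
      right
      constructor
      · omega
      · rw [hg]
        simpa using (Bool.not_eq_true (D i)).mp hDi

noncomputable def valD (n : ℕ) (D : ℕ → Bool) (i : ℕ) : ℕ := (i - gD D i) + fD n D i

lemma valD_lt {D : ℕ → Bool} {i : ℕ} (hi : i < n) : valD n D i < n := by
  have h1 := kD_lt (D := D) hi
  have h2 := gD_le D i
  unfold valD
  omega

lemma same_block {D : ℕ → Bool} {i : ℕ} :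
    ∀ m, m ≤ fD n D i →
      (i + m) - gD D (i + m) = i - gD D i ∧ fD n D (i + m) = fD n D i - m := by
  intro m
  induction m with
  | zero => exact fun _ => ⟨rfl, rfl⟩
  | succ m ih =>
    intro hm
    have hm' : m < fD n D i := by omega
    obtain ⟨hj, hf⟩ := ih (le_of_lt hm')
    have hE : ED n D (i + m) := fD_min hm'
    have hg : gD D (i + m + 1) = gD D (i + m) + 1 := by simp [gD, hE.2]
    have hgl := gD_le D (i + m)
    have hfs : fD n D (i + m + 1) = fD n D (i + m) - 1 := fD_succ hE
    constructor
    · show (i + m + 1) - gD D (i + m + 1) = i - gD D i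
      omega
    · show fD n D (i + m + 1) = fD n D i - (m + 1)
      omega

lemma valD_inj {D : ℕ → Bool} {a b : ℕ} (hb : b < n) (hab : a < b) :
    valD n D a ≠ valD n D b := by
  by_cases hle : b ≤ a + fD n D a
  · obtain ⟨m, rfl⟩ : ∃ m, b = a + m := ⟨b - a, by omega⟩
    obtain ⟨hj, hf⟩ := same_block (n := n) (D := D) (i := a) m (by omega)
    have := gD_le D a
    unfold valD
    rw [hj, hf]
    omega
  · push_neg at hle
    have hjb : a + fD n D a < b - gD D b := by
      by_contra hc
      push_neg at hc
      have hD : D (a + fD n D a) = true := desc_of_block D b _ hc (by omega)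
      exact fD_spec n D a ⟨by omega, hD⟩
    have h1 : valD n D a ≤ a + fD n D a := by
      have := gD_le D a
      unfold valD; omega
    have h2 : b - gD D b ≤ valD n D b := Nat.le_add_right _ _
    omega

noncomputable def permD (n : ℕ) (D : ℕ → Bool) : Equiv.Perm (Fin n) :=
  Equiv.ofBijective (fun i => (⟨valD n D i, valD_lt i.2⟩ : Fin n))
    (Finite.injective_iff_bijective.mp (by
      intro a b hab
      by_contra hne
      have h : valD n D (a : ℕ) = valD n D (b : ℕ) := congrArg Fin.val hab
      rcases lt_or_gt_of_ne (fun he : (a : ℕ) = (b : ℕ) => hne (Fin.ext he)) with h1 | h1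
      · exact valD_inj b.2 h1 h
      · exact valD_inj a.2 h1 h.symm))

lemma p_permD (D : ℕ → Bool) {t : ℕ} (ht : t < n) : p (permD n D) t = valD n D t := by
  rw [p_eq _ ht]; rfl

lemma valD_step_desc {D : ℕ → Bool} {t : ℕ} (ht : t + 1 < n) (hD : D t = true) :
    valD n D (t + 1) + 1 = valD n D t := by
  have hE : ED n D t := ⟨ht, hD⟩
  have hf1 : 0 < fD n D t := fD_pos hE
  have hfs : fD n D (t + 1) = fD n D t - 1 := fD_succ hE
  have hg : gD D (t + 1) = gD D t + 1 := by simp [gD, hD]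
  have := gD_le D t
  unfold valD
  omega

lemma valD_step_asc {D : ℕ → Bool} {t : ℕ} (ht : t + 1 < n) (hD : D t = false) :
    valD n D t < valD n D (t + 1) := by
  have hf0 : fD n D t = 0 := fD_zero (fun h => by have hh := h.2; rw [hD] at hh; simp at hh)
  have hg : gD D (t + 1) = 0 := by simp [gD, hD]
  have := gD_le D t
  unfold valD
  omega

lemma bfree_permD (D : ℕ → Bool) : BFree (permD n D) := by
  intro t ht
  rw [p_permD D (by omega), p_permD D ht]
  cases hD : D t
  · have := valD_step_asc ht hD; omega
  · have := valD_step_desc ht hD; omega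

/-! ### descent pattern of a permutation -/

def Dpi (π : Equiv.Perm (Fin n)) : ℕ → Bool := fun t =>
  if _ : t + 1 < n then decide (p π (t + 1) < p π t) else false

lemma Dpi_permD (D : ℕ → Bool) {t : ℕ} (ht : t + 1 < n) : Dpi (permD n D) t = D t := by
  unfold Dpi
  rw [dif_pos ht, p_permD D ht, p_permD D (by omega : t < n)]
  cases hD : D t
  · have := valD_step_asc ht hD
    simpa using by omega
  · have := valD_step_desc ht hD
    simpa using by omega

lemma drop1 {π : Equiv.Perm (Fin n)} (hB : BFree π) {t : ℕ} (ht : t + 1 < n)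
    (h : Dpi π t = true) : p π (t + 1) + 1 = p π t := by
  unfold Dpi at h
  rw [dif_pos ht] at h
  have h1 := of_decide_eq_true h
  have h2 := hB t ht
  omega

lemma asc1 {π : Equiv.Perm (Fin n)} {t : ℕ} (ht : t + 1 < n)
    (h : Dpi π t = false) : p π t < p π (t + 1) := by
  unfold Dpi at h
  rw [dif_pos ht] at h
  have h1 := of_decide_eq_false h
  have hne : p π t ≠ p π (t + 1) := fun he => by
    have := p_inj π (Nat.lt_of_succ_lt ht) ht he
    omega
  omega

lemma tele {π : Equiv.Perm (Fin n)} (hB : BFree π) :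
    ∀ d aa, aa + d < n → (∀ s, aa ≤ s → s < aa + d → Dpi π s = true) →
      p π aa = p π (aa + d) + d := by
  intro d
  induction d with
  | zero => intro aa _ _; simp
  | succ d ih =>
    intro aa h hs
    have h1 : p π aa = p π (aa + d) + d := ih aa (by omega) (fun s hs1 hs2 => hs s hs1 (by omega))
    have h2 : Dpi π (aa + d) = true := hs _ (by omega) (by omega)
    have h3 : p π (aa + d + 1) + 1 = p π (aa + d) := drop1 hB (by omega) h2
    show p π aa = p π (aa + d + 1) + (d + 1)
    omega

lemma prefix_le {π : Equiv.Perm (Fin n)} (hB : BFree π) {a : ℕ} (han : a < n)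
    (ha : a + 1 = n ∨ (a + 1 < n ∧ p π a < p π (a + 1))) :
    ∀ t, t ≤ a → p π t ≤ a := by
  rcases ha with h | ⟨h1, h2⟩
  · intro t ht
    have := p_lt π (lt_of_le_of_lt ht han)
    omega
  · have L : ∀ t, t ≤ a → p π t < p π (a + 1) := by
      intro t ht
      rcases eq_or_lt_of_le ht with rfl | hlt
      · exact h2
      · by_contra hc
        push_neg at hc
        have hne : p π (a + 1) ≠ p π t := fun he => by
          have := p_inj π h1 (by omega) he
          omega
        refine cross_lemma π hB (i := t) (j := a) (v := p π (a + 1)) hlt (by omega)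
          (by omega) h2 ?_
        intro u hu1 hu2 he
        have := p_inj π (by omega) h1 he
        omega
    have L' : ∀ t, t ≤ a → ∀ u, a < u → u < n → p π t < p π u := by
      intro t ht u hau hun
      rcases eq_or_lt_of_le (show a + 1 ≤ u by omega) with rfl | hu2
      · exact L t ht
      · by_contra hc
        push_neg at hc
        have hne : p π u ≠ p π t := fun he => by
          have := p_inj π hun (by omega) he
          omega
        refine cross_lemma π hB (i := a + 1) (j := u) (v := p π t) hu2 hun (L t ht)
          (by omega) ?_
        intro s hs1 hs2 he
        have := p_inj π (by omega) (by omega) he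
        omega
    intro t ht
    by_contra hc
    push_neg at hc
    have hcard1 : (Finset.image (p π) (Finset.Ioo a n)).card = n - a - 1 := by
      rw [Finset.card_image_of_injOn, Nat.card_Ioo]
      intro x hx y hy he
      exact p_inj π (Finset.mem_Ioo.mp hx).2 (Finset.mem_Ioo.mp hy).2 he
    have hsub : Finset.image (p π) (Finset.Ioo a n) ⊆ Finset.Ioo (p π t) n := by
      intro v hv
      rw [Finset.mem_image] at hv
      obtain ⟨u, hu, rfl⟩ := hv
      rw [Finset.mem_Ioo] at hu ⊢
      exact ⟨L' t ht u hu.1 hu.2, p_lt π hu.2⟩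
    have hcc := Finset.card_le_card hsub
    rw [hcard1, Nat.card_Ioo] at hcc
    have := p_lt π (show t < n by omega)
    omega

lemma prefix_image {π : Equiv.Perm (Fin n)} {a : ℕ} (han : a < n)
    (hpre : ∀ t, t ≤ a → p π t ≤ a) :
    Finset.image (p π) (Finset.range (a + 1)) = Finset.range (a + 1) := by
  apply Finset.eq_of_subset_of_card_le
  · intro v hv
    rw [Finset.mem_image] at hv
    obtain ⟨u, hu, rfl⟩ := hv
    rw [Finset.mem_range] at hu ⊢
    have := hpre u (by omega)
    omega
  · have hc : (Finset.image (p π) (Finset.range (a + 1))).card = (Finset.range (a + 1)).card := by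
      apply Finset.card_image_of_injOn
      intro x hx y hy he
      simp only [Finset.coe_range, Set.mem_Iio] at hx hy
      exact p_inj π (by omega) (by omega) he
    omega

lemma recon {π : Equiv.Perm (Fin n)} (hB : BFree π) {i : ℕ} (hi : i < n) :
    p π i = valD n (Dpi π) i := by
  have hgle : gD (Dpi π) i ≤ i := gD_le (Dpi π) i
  have hk : i + fD n (Dpi π) i < n := kD_lt hi
  have hasck : (i + fD n (Dpi π) i) + 1 = n ∨
      ((i + fD n (Dpi π) i) + 1 < n ∧ p π (i + fD n (Dpi π) i) < p π ((i + fD n (Dpi π) i) + 1)) := by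
    rcases Nat.lt_or_ge ((i + fD n (Dpi π) i) + 1) n with h | h
    · right
      refine ⟨h, ?_⟩
      have hspec := fD_spec n (Dpi π) i
      have hDk : Dpi π (i + fD n (Dpi π) i) = false := by
        by_contra hcc
        exact hspec ⟨h, (Bool.not_eq_false _).mp hcc⟩
      exact asc1 h hDk
    · left; omega
  have hprek := prefix_le hB hk hasck
  have hdesc : ∀ s, i - gD (Dpi π) i ≤ s → s < i + fD n (Dpi π) i → Dpi π s = true := by
    intro s h1 h2
    rcases Nat.lt_or_ge s i with h | h
    · exact desc_of_block (Dpi π) i s h1 h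
    · have hm : s - i < fD n (Dpi π) i := by omega
      have := (fD_min hm).2
      rw [show i + (s - i) = s by omega] at this
      exact this
  obtain ⟨t, htk, hpt⟩ : ∃ t, t ≤ i + fD n (Dpi π) i ∧ p π t = i + fD n (Dpi π) i := by
    have himg := prefix_image hk hprek
    have hmem : i + fD n (Dpi π) i ∈
        Finset.image (p π) (Finset.range (i + fD n (Dpi π) i + 1)) := by
      rw [himg, Finset.mem_range]
      omega
    obtain ⟨u, hu, he⟩ := Finset.mem_image.mp hmem
    rw [Finset.mem_range] at hu
    exact ⟨u, by omega, he⟩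
  have htj : i - gD (Dpi π) i ≤ t := by
    rcases block_start (Dpi π) i with h0 | ⟨hj0, hDj⟩
    · omega
    · by_contra hcc
      push_neg at hcc
      have hasc : p π (i - gD (Dpi π) i - 1) < p π ((i - gD (Dpi π) i - 1) + 1) := by
        apply asc1 (show (i - gD (Dpi π) i - 1) + 1 < n by omega)
        rw [show (i - gD (Dpi π) i - 1) = i - gD (Dpi π) i - 1 from rfl]
        exact hDj
      have hprej := prefix_le hB (show i - gD (Dpi π) i - 1 < n by omega)
        (Or.inr ⟨by omega, hasc⟩)
      have := hprej t (by omega)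
      omega
  have htelejt : p π (i - gD (Dpi π) i) = p π t + (t - (i - gD (Dpi π) i)) := by
    have := tele hB (t - (i - gD (Dpi π) i)) (i - gD (Dpi π) i) (by omega)
      (fun s hs1 hs2 => hdesc s hs1 (by omega))
    rw [show (i - gD (Dpi π) i) + (t - (i - gD (Dpi π) i)) = t by omega] at this
    exact this
  have hpjk : p π (i - gD (Dpi π) i) ≤ i + fD n (Dpi π) i := hprek _ (by omega)
  have hpj : p π (i - gD (Dpi π) i) = i + fD n (Dpi π) i := by omega
  have hteleji : p π (i - gD (Dpi π) i) = p π i + (i - (i - gD (Dpi π) i)) := by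
    have := tele hB (i - (i - gD (Dpi π) i)) (i - gD (Dpi π) i) (by omega)
      (fun s hs1 hs2 => hdesc s hs1 (by omega))
    rw [show (i - gD (Dpi π) i) + (i - (i - gD (Dpi π) i)) = i by omega] at this
    exact this
  unfold valD
  omega

end BD

/-- For `n ≥ 1`: every permutation of length `n` avoiding both 231 and 312 has no big
descents, and there are `2^(n-1)` such permutations; that is, `b_{n,0}({231,312}) = 2^(n-1)`
and `b_{n,k}({231,312}) = 0` for all `k ≥ 1`. -/
theorem bdes_distribution_avoids231_312 (n : ℕ) (hn : 1 ≤ n) :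
    (∀ π : Equiv.Perm (Fin n), Avoids π perm231 → Avoids π perm312 → bdes π = 0) ∧
    Nat.card {π : Equiv.Perm (Fin n) // (Avoids π perm231 ∧ Avoids π perm312) ∧ bdes π = 0} =
      2 ^ (n - 1) ∧
    ∀ k, 1 ≤ k →
      Nat.card {π : Equiv.Perm (Fin n) // (Avoids π perm231 ∧ Avoids π perm312) ∧ bdes π = k}
        = 0 := by
  have hQ : ∀ π : Equiv.Perm (Fin n),
      ((Avoids π perm231 ∧ Avoids π perm312) ∧ bdes π = 0) ↔ BD.BFree π := by
    intro π
    constructor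
    · rintro ⟨_, h⟩
      exact (BD.bdes_eq_zero_iff π).mp h
    · intro h
      exact ⟨⟨BD.bfree_avoids231 π h, BD.bfree_avoids312 π h⟩,
        (BD.bdes_eq_zero_iff π).mpr h⟩
  refine ⟨?_, ?_, ?_⟩
  · intro π h1 h2
    exact (BD.bdes_eq_zero_iff π).mpr (BD.avoids_bfree π h1 h2)
  · have e : {π : Equiv.Perm (Fin n) // (Avoids π perm231 ∧ Avoids π perm312) ∧ bdes π = 0}
        ≃ (Fin (n - 1) → Bool) :=
      { toFun := fun x i => BD.Dpi x.1 (i : ℕ)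
        invFun := fun Db =>
          ⟨BD.permD n (fun t => if h : t + 1 < n then Db ⟨t, by omega⟩ else false),
            (hQ _).mpr (BD.bfree_permD _)⟩
        left_inv := fun x => by
          apply Subtype.ext
          have hBx : BD.BFree x.1 := (hQ x.1).mp x.2
          have key : ∀ E : ℕ → Bool, E = BD.Dpi x.1 → BD.permD n E = x.1 := by
            rintro E rfl
            apply Equiv.ext
            intro z
            apply Fin.ext
            calc ((BD.permD n (BD.Dpi x.1)) z : ℕ)
                = BD.p (BD.permD n (BD.Dpi x.1)) (z : ℕ) := (BD.p_val _ z).symm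
              _ = BD.valD n (BD.Dpi x.1) (z : ℕ) := BD.p_permD _ z.2
              _ = BD.p x.1 (z : ℕ) := (BD.recon hBx z.2).symm
              _ = (x.1 z : ℕ) := BD.p_val _ z
          apply key
          funext t
          by_cases h : t + 1 < n
          · simp only [dif_pos h]
          · simp only [dif_neg h]
            unfold BD.Dpi
            rw [dif_neg h]
        right_inv := fun Db => by
          funext i
          have hi1 : (i : ℕ) + 1 < n := by have := i.2; omega
          show BD.Dpi _ (i : ℕ) = Db i
          rw [BD.Dpi_permD _ hi1, dif_pos hi1] }
    rw [Nat.card_congr e, Nat.card_eq_fintype_card]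
    simp
  · intro k hk
    have : IsEmpty
        {π : Equiv.Perm (Fin n) // (Avoids π perm231 ∧ Avoids π perm312) ∧ bdes π = k} := by
      constructor
      rintro ⟨π, ⟨⟨h1, h2⟩, hbd⟩⟩
      have h0 := (BD.bdes_eq_zero_iff π).mpr (BD.avoids_bfree π h1 h2)
      omega
    exact Nat.card_of_isEmpty
end

section
/- Let B = Σ_{n≥0} (Σ_{π ∈ S_n(132)} t^{bdes(π)}) x^n and let B̄ = Σ_{n≥1} (Σ_{π ∈ S_n(132), π_1 = n} t^{bdes(π)}) x^n, both regarded as formal power series in x with coefficients in ℤ[t]. Then B = 1 + B̄ + x(B − 1) + t·x·(B − 1)² and B̄ = x·(1 + B̄ + t·(B − B̄ − 1)) as identities in (ℤ[t])[[x]]. -/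
open scoped Classical

/-- The generating function `B = Σ_n Σ_{π ∈ S_n(132)} t^{bdes π} x^n`, as a formal power
series in `x` with coefficients in `ℤ[t]`. -/
noncomputable def B132 : PowerSeries (Polynomial ℤ) :=
  PowerSeries.mk fun n =>
    ∑ π ∈ Finset.univ.filter (fun π : Equiv.Perm (Fin n) => Avoids π perm132),
      Polynomial.X ^ bdes π

/-- The generating function `B̄ = Σ_{n≥1} Σ_{π ∈ S_n(132), π₁ = n} t^{bdes π} x^n`, the
restriction of `B132` to permutations whose first letter is the largest value. -/
noncomputable def Bbar132 : PowerSeries (Polynomial ℤ) :=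
  PowerSeries.mk fun n =>
    if h : 0 < n then
      ∑ π ∈ Finset.univ.filter
        (fun π : Equiv.Perm (Fin n) => Avoids π perm132 ∧ ((π ⟨0, h⟩ : ℕ) = n - 1)),
        Polynomial.X ^ bdes π
    else 0

/-! Written as a list of the values `0, …, n`, a 132-avoiding permutation of size `n + 1`
factors uniquely as `α n γ` with every entry of `α` above every entry of `γ`, where `α` and `γ`
are (shifted) 132-avoiders of sizes `i + j = n`, and every such pair occurs. The big descents of
`α n γ` are those of `α` and of `γ`, plus one at `n γ₁` unless `γ` is empty, or `α` is empty and
`γ₁ = n - 1`. Summing over `i + j = n` gives, for the coefficients `bₙ` of `B` and `b̄ₙ` of `B̄`,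
`bₙ₊₁ = b̄ₙ₊₁ + [xⁿ] (B - 1)(1 + t(B - 1))` and `b̄ₙ₊₂ = b̄ₙ₊₁ + t [xⁿ] (B - 1)(1 + t(B - 1))`,
which are the two functional equations. -/

open Equiv Finset
open scoped List

def Has132 (l : List ℕ) : Prop := ∃ x y z, [x, y, z] <+ l ∧ x < z ∧ z < y

theorem has132_map_iff {f : ℕ → ℕ} (hf : StrictMono f) {l : List ℕ} :
    Has132 (l.map f) ↔ Has132 l := by
  constructor
  · rintro ⟨x, y, z, hs, hxz, hzy⟩
    obtain ⟨l', hl', hmap⟩ := List.sublist_map_iff.mp hs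
    match l', hmap with
    | [x', y', z'], h =>
      simp only [List.map_cons, List.map_nil, List.cons.injEq, and_true] at h
      obtain ⟨rfl, rfl, rfl⟩ := h
      exact ⟨x', y', z', hl', hf.lt_iff_lt.mp hxz, hf.lt_iff_lt.mp hzy⟩
  · rintro ⟨x, y, z, hs, hxz, hzy⟩
    exact ⟨f x, f y, f z, hs.map f, hf hxz, hf hzy⟩

theorem has132_append_cons_iff {a c : List ℕ} {M : ℕ} (hM : ∀ x ∈ a ++ c, x < M) :
    Has132 (a ++ M :: c) ↔ Has132 a ∨ Has132 c ∨ ∃ x ∈ a, ∃ y ∈ c, x < y := by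
  simp only [List.mem_append] at hM
  constructor
  · rintro ⟨x, y, z, hs, hxz, hzy⟩
    simp only [List.sublist_append_iff, List.cons_eq_append_iff, List.nil_eq_append_iff] at hs
    rcases hs with ⟨_, _, (⟨rfl, rfl⟩ | ⟨_, rfl, (⟨rfl, rfl⟩ | ⟨_, rfl, (⟨rfl, rfl⟩ |
      ⟨_, rfl, rfl, rfl⟩)⟩)⟩), ha, hc⟩ <;>
      simp only [List.nil_sublist, List.singleton_sublist, List.sublist_cons_iff, List.cons.injEq,
        List.nil_eq, existsAndEq, and_true] at ha hc
    · rcases hc with hc | ⟨rfl, hc⟩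
      · exact .inr (.inl ⟨x, y, z, hc, hxz, hzy⟩)
      · exact absurd (hM z (.inr (hc.subset (by simp)))) (by omega)
    · have hz : z ∈ c := by
        rcases hc with hc | ⟨rfl, hc⟩
        exacts [hc.subset (by simp), hc]
      exact .inr (.inr ⟨x, ha, z, hz, hxz⟩)
    · rcases hc with hz | rfl
      · exact .inr (.inr ⟨x, ha.subset (by simp), z, hz, hxz⟩)
      · exact absurd (hM y (.inl (ha.subset (by simp)))) (by omega)
    · exact .inl ⟨x, y, z, ha, hxz, hzy⟩
  · rintro (⟨x, y, z, hs, h⟩ | ⟨x, y, z, hs, h⟩ | ⟨x, hx, y, hy, hxy⟩)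
    · exact ⟨x, y, z, hs.trans (List.sublist_append_left _ _), h⟩
    · exact ⟨x, y, z, hs.trans ((List.sublist_cons_self _ _).trans (List.sublist_append_right _ _)),
        h⟩
    · exact ⟨x, M, y, (List.singleton_sublist.mpr hx).append
        ((List.singleton_sublist.mpr hy).cons_cons M), hxy, hM y (.inr hy)⟩

def bigDescents : List ℕ → ℕ
  | x :: y :: l => bigDescents (y :: l) + if y + 1 < x then 1 else 0
  | _ => 0

theorem card_filter_eq_bigDescents : ∀ l : List ℕ,
    ((range l.length).filter fun k => ∃ hk : k + 1 < l.length, l[k + 1] + 1 < l[k]).card =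
      bigDescents l
  | [] => rfl
  | [_] => rfl
  | x :: y :: l => by
    rw [bigDescents, ← card_filter_eq_bigDescents (y :: l)]
    simp only [card_filter, List.length_cons, sum_range_succ' _ (l.length + 1)]
    simp

theorem bigDescents_map_add (m : ℕ) : ∀ l : List ℕ, bigDescents (l.map (m + ·)) = bigDescents l
  | [] | [_] => rfl
  | x :: y :: l => by
    simp only [List.map_cons, bigDescents, ← bigDescents_map_add m (y :: l), add_assoc,
      Nat.add_lt_add_iff_left]

theorem bigDescents_append_cons {M : ℕ} (c : List ℕ) :
    ∀ a : List ℕ, (∀ x ∈ a, x ≤ M + 1) →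
      bigDescents (a ++ M :: c) = bigDescents a + bigDescents (M :: c)
  | [], _ => by simp [bigDescents]
  | [x], ha => by
    rw [List.singleton_append, bigDescents, if_neg (not_lt.mpr (ha x List.mem_cons_self))]
    simp [bigDescents]
  | x :: y :: a, ha => by
    have := bigDescents_append_cons c (y :: a) fun z hz => ha z (List.mem_cons_of_mem x hz)
    simp only [List.cons_append, bigDescents] at this ⊢
    omega

def oneLine {n : ℕ} (π : Perm (Fin n)) : List ℕ := List.ofFn fun i => (π i : ℕ)

theorem oneLine_injective {n : ℕ} : Function.Injective (oneLine (n := n)) := fun _ _ h =>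
  Equiv.ext fun i => Fin.val_injective (congrFun (List.ofFn_inj.mp h) i)

theorem oneLine_perm_range {n : ℕ} (π : Perm (Fin n)) : oneLine π ~ List.range n := by
  have hval : List.ofFn (fun i : Fin n => (i : ℕ)) = List.range n :=
    List.ext_getElem (by simp) (by simp)
  exact hval ▸ π.ofFn_comp_perm Fin.val

theorem sum_oneLine {β : Type*} [AddCommMonoid β] (n : ℕ) (f : List ℕ → β) :
    ∑ π : Perm (Fin n), f (oneLine π) = ∑ l ∈ (List.range n).permutations.toFinset, f l := by
  rw [← sum_image fun _ _ _ _ h => oneLine_injective h]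
  congr 1
  apply eq_of_subset_of_card_le
  · simp [subset_iff, List.mem_permutations, oneLine_perm_range]
  · rw [card_image_of_injective _ oneLine_injective, card_univ, Fintype.card_perm,
      Fintype.card_fin, List.toFinset_card_of_nodup (List.nodup_permutations _ List.nodup_range),
      List.length_permutations, List.length_range]

theorem bdes_eq_bigDescents {n : ℕ} (π : Perm (Fin n)) : bdes π = bigDescents (oneLine π) := by
  rw [← card_filter_eq_bigDescents]
  simp [bdes, oneLine]

theorem headI_oneLine {n : ℕ} (π : Perm (Fin (n + 1))) : (oneLine π).headI = π 0 := by
  simp [oneLine, List.ofFn_succ]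

theorem contains_perm132_iff {n : ℕ} (π : Perm (Fin n)) :
    Contains π perm132 ↔ ∃ i j k, i < j ∧ j < k ∧ π i < π k ∧ π k < π j := by
  constructor
  · rintro ⟨f, hf, hσ⟩
    exact ⟨f 0, f 1, f 2, hf (by decide), hf (by decide), (hσ 0 2).mp (by decide),
      (hσ 2 1).mp (by decide)⟩
  · rintro ⟨i, j, k, hij, hjk, hik, hkj⟩
    refine ⟨![i, j, k], Fin.strictMono_iff_lt_succ.mpr fun a => ?_, fun a b => ?_⟩
    · fin_cases a <;> assumption
    · have hij' := hik.trans hkj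
      fin_cases a <;> fin_cases b <;> simp [perm132] <;> order

theorem List.triple_sublist_finRange_iff {n : ℕ} {i j k : Fin n} :
    [i, j, k] <+ List.finRange n ↔ i < j ∧ j < k := by
  refine ⟨fun h => ?_, fun h => ?_⟩
  · have := (List.pairwise_lt_finRange n).sublist h
    simp only [List.pairwise_cons, List.mem_cons, List.not_mem_nil] at this
    exact ⟨this.1 j (.inl rfl), this.2.1 k (.inl rfl)⟩
  · have hpw : [i, j, k].Pairwise (· < ·) := by simp [h.1, h.2, h.1.trans h.2]
    exact List.sublist_of_subperm_of_pairwise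
      (List.subperm_of_subset (hpw.imp ne_of_lt) fun x _ => List.mem_finRange x)
      hpw (List.pairwise_lt_finRange n)

theorem has132_ofFn_iff {n : ℕ} (g : Fin n → ℕ) :
    Has132 (List.ofFn g) ↔ ∃ i j k, i < j ∧ j < k ∧ g i < g k ∧ g k < g j := by
  simp only [Has132, List.ofFn_eq_map, List.sublist_map_iff]
  constructor
  · rintro ⟨x, y, z, ⟨l, hl, hmap⟩, hxz, hzy⟩
    match l, hmap with
    | [i, j, k], h =>
      simp only [List.map_cons, List.map_nil, List.cons.injEq, and_true] at h
      obtain ⟨rfl, rfl, rfl⟩ := h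
      obtain ⟨hij, hjk⟩ := List.triple_sublist_finRange_iff.mp hl
      exact ⟨i, j, k, hij, hjk, hxz, hzy⟩
  · rintro ⟨i, j, k, hij, hjk, h⟩
    exact ⟨g i, g j, g k, ⟨[i, j, k], List.triple_sublist_finRange_iff.mpr ⟨hij, hjk⟩, rfl⟩, h⟩

theorem avoids_perm132_iff {n : ℕ} (π : Perm (Fin n)) :
    Avoids π perm132 ↔ ¬Has132 (oneLine π) := by
  rw [Avoids, contains_perm132_iff, oneLine, has132_ofFn_iff]
  simp only [Fin.lt_def]

noncomputable def avoiders (n : ℕ) : Finset (List ℕ) :=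
  (List.range n).permutations.toFinset.filter fun l => ¬Has132 l

theorem mem_avoiders {n : ℕ} {l : List ℕ} : l ∈ avoiders n ↔ l ~ List.range n ∧ ¬Has132 l := by
  simp [avoiders, List.mem_permutations]

theorem avoiders_zero : avoiders 0 = {[]} := by
  ext l
  simp only [mem_avoiders, List.range_zero, List.perm_nil, mem_singleton, and_iff_left_iff_imp]
  rintro rfl ⟨x, y, z, hs, -⟩
  exact List.cons_ne_nil _ _ (List.sublist_nil.mp hs)

theorem length_of_mem_avoiders {n : ℕ} {l : List ℕ} (hl : l ∈ avoiders n) : l.length = n := by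
  simpa using (mem_avoiders.mp hl).1.length_eq

theorem lt_of_mem_avoiders {n : ℕ} {l : List ℕ} (hl : l ∈ avoiders n) {x : ℕ} (hx : x ∈ l) :
    x < n :=
  List.mem_range.mp ((mem_avoiders.mp hl).1.subset hx)

theorem perm_range_of_append_perm_range {n : ℕ} {p c : List ℕ} (h : p ++ c ~ List.range n)
    (hpc : ∀ x ∈ p, ∀ y ∈ c, y < x) :
    c ~ List.range c.length ∧ p ~ (List.range p.length).map (c.length + ·) := by
  have hn : n = c.length + p.length := by simpa [add_comm] using h.length_eq.symm
  have hmem : ∀ x, x ∈ p ++ c ↔ x < n := fun x => by simpa using h.mem_iff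
  -- `c` contains every value below any of its entries, so it cannot contain values `≥ c.length`.
  have hc : ∀ y ∈ c, y < c.length := by
    intro y hy
    have hsub : List.range (y + 1) ⊆ c := by
      intro z hz
      have hzy : z ≤ y := Nat.lt_succ_iff.mp (List.mem_range.mp hz)
      rcases List.mem_append.mp ((hmem z).mpr (hzy.trans_lt ((hmem y).mp (by simp [hy]))))
        with hzp | hzc
      · exact absurd (hpc z hzp y hy) (not_lt.mpr hzy)
      · exact hzc
    simpa using (List.subperm_of_subset List.nodup_range hsub).length_le
  have hcperm : c ~ List.range c.length :=
    (List.subperm_of_subset (h.nodup_iff.mpr List.nodup_range).of_append_right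
      fun y hy => List.mem_range.mpr (hc y hy)).perm_of_length_le (by simp)
  refine ⟨hcperm, (List.perm_append_left_iff (List.range c.length)).mp ?_⟩
  rw [← List.range_add, ← hn]
  exact (hcperm.symm.append_right p).trans (List.perm_append_comm.trans h)

def joinMax (n : ℕ) (a c : List ℕ) : List ℕ := a.map (c.length + ·) ++ n :: c

theorem length_add_lt_of_mem_avoiders {i j : ℕ} {a c : List ℕ} (ha : a ∈ avoiders i)
    (hc : c ∈ avoiders j) : ∀ x ∈ a, c.length + x < i + j := fun x hx => by
  rw [length_of_mem_avoiders hc, add_comm i]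
  exact Nat.add_lt_add_left (lt_of_mem_avoiders ha hx) j

theorem joinMax_mem_avoiders {i j : ℕ} {a c : List ℕ} (ha : a ∈ avoiders i)
    (hc : c ∈ avoiders j) : joinMax (i + j) a c ∈ avoiders (i + j + 1) := by
  obtain ⟨hap, has⟩ := mem_avoiders.mp ha
  obtain ⟨hcp, hcs⟩ := mem_avoiders.mp hc
  have hlt : ∀ x ∈ a.map (c.length + ·) ++ c, x < i + j := by
    simp only [List.mem_append, List.mem_map]
    rintro _ (⟨x, hx, rfl⟩ | hy)
    · exact length_add_lt_of_mem_avoiders ha hc x hx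
    · exact (lt_of_mem_avoiders hc hy).trans_le (Nat.le_add_left j i)
  refine mem_avoiders.mpr ⟨?_, ?_⟩
  · calc joinMax (i + j) a c
        _ ~ (i + j) :: (c ++ a.map (j + ·)) :=
          length_of_mem_avoiders hc ▸ List.perm_middle.trans (List.perm_append_comm.cons _)
        _ ~ (i + j) :: (List.range j ++ (List.range i).map (j + ·)) :=
          (hcp.append (hap.map _)).cons _
        _ = (i + j) :: List.range (i + j) := by rw [← List.range_add, add_comm]
        _ ~ List.range (i + j + 1) := by
          rw [List.range_succ]
          exact (List.perm_append_singleton _ _).symm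
  · rw [joinMax, has132_append_cons_iff hlt, has132_map_iff add_right_strictMono]
    rintro (h | h | ⟨_, hx, y, hy, hxy⟩)
    · exact has h
    · exact hcs h
    · obtain ⟨x, -, rfl⟩ := List.mem_map.mp hx
      have := lt_of_mem_avoiders hc hy
      have := length_of_mem_avoiders hc
      omega

theorem exists_joinMax_eq {n : ℕ} {l : List ℕ} (hl : l ∈ avoiders (n + 1)) :
    ∃ p ∈ antidiagonal n, ∃ a ∈ avoiders p.1, ∃ c ∈ avoiders p.2, joinMax n a c = l := by
  obtain ⟨hperm, hav⟩ := mem_avoiders.mp hl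
  obtain ⟨p, c, rfl⟩ := List.append_of_mem (hperm.mem_iff.mpr List.self_mem_range_succ)
  have hpc : p ++ c ~ List.range n := by
    refine (List.perm_middle.symm.trans (hperm.trans ?_)).cons_inv
    rw [List.range_succ]
    exact List.perm_append_singleton _ _
  have hlt : ∀ x ∈ p ++ c, x < n := fun x hx => List.mem_range.mp (hpc.subset hx)
  have hdisj := List.disjoint_of_nodup_append (hpc.nodup_iff.mpr List.nodup_range)
  have hsplit : ∀ x ∈ p, ∀ y ∈ c, y < x := by
    intro x hx y hy
    have hxy : ¬x < y := fun hxy =>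
      hav ((has132_append_cons_iff hlt).mpr (.inr (.inr ⟨x, hx, y, hy, hxy⟩)))
    have hne : x ≠ y := fun h => hdisj hx (h ▸ hy)
    omega
  obtain ⟨hc, hp⟩ := perm_range_of_append_perm_range hpc hsplit
  have hback : (p.map (· - c.length)).map (c.length + ·) = p := by
    rw [List.map_map]
    refine (List.map_congr_left fun x hx => ?_).trans (List.map_id p)
    obtain ⟨y, -, rfl⟩ := List.mem_map.mp (hp.mem_iff.mp hx)
    simp
  refine ⟨(p.length, c.length), by simpa [add_comm] using hpc.length_eq, p.map (· - c.length),
    mem_avoiders.mpr ⟨?_, fun h => hav ?_⟩, c, mem_avoiders.mpr ⟨hc, fun h => hav ?_⟩, ?_⟩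
  · simpa [List.map_map, Function.comp_def] using hp.map (· - c.length)
  · rw [has132_append_cons_iff hlt, ← hback, has132_map_iff add_right_strictMono]
    exact .inl h
  · exact (has132_append_cons_iff hlt).mpr (.inr (.inl h))
  · rw [joinMax, hback]

theorem eq_of_joinMax_eq {n : ℕ} {a c a' c' : List ℕ} (ha : ∀ x ∈ a, c.length + x < n)
    (hc : ∀ y ∈ c, y < n) (h : joinMax n a c = joinMax n a' c') : a = a' ∧ c = c' := by
  have hna : n ∉ a.map (c.length + ·) := fun hn => by
    obtain ⟨x, hx, hxn⟩ := List.mem_map.mp hn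
    exact (ha x hx).ne hxn
  obtain ⟨hmap, -, rfl⟩ := (List.append_cons_inj_of_notMem hna fun hn => (hc n hn).false).mp h
  exact ⟨List.map_injective_iff.mpr (add_right_injective _) hmap, rfl⟩

theorem sum_avoiders_succ {β : Type*} [AddCommMonoid β] (n : ℕ) (f : List ℕ → β) :
    ∑ l ∈ avoiders (n + 1), f l =
      ∑ p ∈ antidiagonal n, ∑ a ∈ avoiders p.1, ∑ c ∈ avoiders p.2, f (joinMax n a c) := by
  simp_rw [← sum_product', sum_sigma']
  symm
  apply sum_bij (fun x _ => joinMax n x.2.1 x.2.2)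
  · rintro ⟨⟨i, j⟩, a, c⟩ hx
    simp only [mem_sigma, HasAntidiagonal.mem_antidiagonal, mem_product] at hx
    obtain ⟨rfl, ha, hc⟩ := hx
    exact joinMax_mem_avoiders ha hc
  · rintro ⟨⟨i, j⟩, a, c⟩ hx ⟨⟨i', j'⟩, a', c'⟩ hx' h
    simp only [mem_sigma, HasAntidiagonal.mem_antidiagonal, mem_product] at hx hx'
    obtain ⟨rfl, ha, hc⟩ := hx
    obtain ⟨hn, ha', hc'⟩ := hx'
    obtain ⟨rfl, rfl⟩ := eq_of_joinMax_eq (length_add_lt_of_mem_avoiders ha hc)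
      (fun y hy => (lt_of_mem_avoiders hc hy).trans_le (Nat.le_add_left j i)) h
    obtain ⟨rfl, rfl⟩ : i' = i ∧ j' = j := by
      rw [← length_of_mem_avoiders ha, ← length_of_mem_avoiders hc]
      exact ⟨(length_of_mem_avoiders ha').symm, (length_of_mem_avoiders hc').symm⟩
    rfl
  · intro l hl
    obtain ⟨p, hp, a, ha, c, hc, rfl⟩ := exists_joinMax_eq hl
    exact ⟨⟨p, a, c⟩, mem_sigma.mpr ⟨hp, mem_product.mpr ⟨ha, hc⟩⟩, rfl⟩
  · exact fun _ _ => rfl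

theorem headI_joinMax_lt {n : ℕ} {a c : List ℕ} (ha : ∀ x ∈ a, c.length + x < n) (hne : a ≠ []) :
    (joinMax n a c).headI < n := by
  obtain ⟨x, a, rfl⟩ := List.exists_cons_of_ne_nil hne
  exact ha x List.mem_cons_self

theorem bigDescents_joinMax {n : ℕ} {a c : List ℕ} (ha : ∀ x ∈ a, c.length + x < n) :
    bigDescents (joinMax n a c) = bigDescents a + bigDescents (n :: c) := by
  rw [joinMax, bigDescents_append_cons, bigDescents_map_add]
  simp only [List.mem_map, forall_exists_index, and_imp, forall_apply_eq_imp_iff₂]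
  exact fun x hx => (ha x hx).le.trans n.le_succ

theorem bigDescents_cons_joinMax {n : ℕ} {a c : List ℕ} (ha : ∀ x ∈ a, c.length + x < n) :
    bigDescents ((n + 1) :: joinMax n a c) =
      bigDescents (joinMax n a c) + if a = [] then 0 else 1 := by
  cases a with
  | nil => simp [joinMax, bigDescents]
  | cons x a => simp [joinMax, bigDescents, ha x List.mem_cons_self]

theorem sum_avoids_perm132 {β : Type*} [AddCommMonoid β] (n : ℕ) (g : List ℕ → β) :
    ∑ π ∈ univ.filter (fun π : Perm (Fin n) => Avoids π perm132), g (oneLine π) =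
      ∑ l ∈ avoiders n, g l := by
  rw [sum_filter, avoiders, sum_filter, ← sum_oneLine]
  simp_rw [avoids_perm132_iff]

theorem sum_antidiagonal_ite_fst_eq_zero {β : Type*} [AddCommMonoid β] (n : ℕ) (v : β) :
    ∑ p ∈ antidiagonal n, (if p.1 = 0 then v else 0) = v := by
  rw [Nat.sum_antidiagonal_eq_sum_range_succ_mk]
  simp

open PowerSeries

theorem coeff_B132 (n : ℕ) : coeff n B132 = ∑ l ∈ avoiders n, Polynomial.X ^ bigDescents l := by
  rw [B132, coeff_mk, ← sum_avoids_perm132]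
  simp_rw [bdes_eq_bigDescents]

theorem constantCoeff_B132 : constantCoeff B132 = 1 := by
  simp [← coeff_zero_eq_constantCoeff_apply, coeff_B132, avoiders_zero, bigDescents]

theorem constantCoeff_Bbar132 : constantCoeff Bbar132 = 0 := by
  simp [← coeff_zero_eq_constantCoeff_apply, Bbar132]

theorem coeff_succ_Bbar132 (n : ℕ) :
    coeff (n + 1) Bbar132 = ∑ c ∈ avoiders n, Polynomial.X ^ bigDescents (n :: c) := by
  have hfirst : ∀ π : Perm (Fin (n + 1)), (π ⟨0, n.succ_pos⟩ : ℕ) = n + 1 - 1 ↔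
      (oneLine π).headI = n := fun π => by rw [headI_oneLine]; rfl
  rw [Bbar132, coeff_mk, dif_pos n.succ_pos, ← filter_filter, sum_filter]
  simp_rw [hfirst, bdes_eq_bigDescents]
  rw [sum_avoids_perm132 (n + 1) fun l => if l.headI = n then Polynomial.X ^ bigDescents l else 0,
    sum_avoiders_succ, sum_eq_single_of_mem (0, n) (by simp)]
  · simp [avoiders_zero, joinMax]
  · rintro ⟨i, j⟩ hp hne
    rw [HasAntidiagonal.mem_antidiagonal] at hp
    subst hp
    have hi : i ≠ 0 := by
      rintro rfl
      simp at hne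
    refine sum_eq_zero fun a ha => sum_eq_zero fun c hc => if_neg (ne_of_lt ?_)
    refine headI_joinMax_lt (length_add_lt_of_mem_avoiders ha hc) ?_
    rintro rfl
    exact hi (length_of_mem_avoiders ha).symm

-- The factor `1 + t(B - 1)`: a nonempty `c` behind a maximum `n > c.length` adds a big descent.
theorem sum_avoiders_cons_of_lt {j n : ℕ} (hj : j < n) :
    ∑ c ∈ avoiders j, Polynomial.X ^ bigDescents (n :: c) =
      coeff j (1 + C Polynomial.X * (B132 - 1)) := by
  rcases j with _ | j
  · simp [avoiders_zero, bigDescents, constantCoeff_B132]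
  · rw [map_add, coeff_one, if_neg j.succ_ne_zero, coeff_C_mul, map_sub, coeff_one,
      if_neg j.succ_ne_zero, coeff_B132, zero_add, sub_zero, mul_sum]
    refine sum_congr rfl fun c hc => ?_
    obtain ⟨y, c, rfl⟩ := List.exists_cons_of_length_eq_add_one (length_of_mem_avoiders hc)
    have := lt_of_mem_avoiders hc List.mem_cons_self
    rw [bigDescents, if_pos (by omega), pow_succ', mul_comm]

theorem sum_avoiders_joinMax {i j n : ℕ} (h : i + j = n) :
    ∑ a ∈ avoiders i, ∑ c ∈ avoiders j, Polynomial.X ^ bigDescents (joinMax n a c) =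
      (if i = 0 then coeff (n + 1) Bbar132 else 0) +
        coeff i (B132 - 1) * coeff j (1 + C Polynomial.X * (B132 - 1)) := by
  subst h
  have hfactor : ∑ a ∈ avoiders i, ∑ c ∈ avoiders j,
      Polynomial.X ^ bigDescents (joinMax (i + j) a c) =
        coeff i B132 * ∑ c ∈ avoiders j, Polynomial.X ^ bigDescents ((i + j) :: c) := by
    rw [coeff_B132, sum_mul_sum]
    refine sum_congr rfl fun a ha => sum_congr rfl fun c hc => ?_
    rw [bigDescents_joinMax (length_add_lt_of_mem_avoiders ha hc), pow_add]
  rw [hfactor]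
  rcases i with _ | i
  · simp [coeff_succ_Bbar132, constantCoeff_B132]
  · rw [sum_avoiders_cons_of_lt (by omega)]
    simp only [map_sub, coeff_one, i.succ_ne_zero, if_false, sub_zero, zero_add]

theorem sum_avoiders_cons_joinMax {i j n : ℕ} (h : i + j = n) :
    ∑ a ∈ avoiders i, ∑ c ∈ avoiders j, Polynomial.X ^ bigDescents ((n + 1) :: joinMax n a c) =
      (if i = 0 then coeff (n + 1) Bbar132 else 0) +
        Polynomial.X * (coeff i (B132 - 1) * coeff j (1 + C Polynomial.X * (B132 - 1))) := by
  have hterm : ∀ a ∈ avoiders i, ∀ c ∈ avoiders j,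
      Polynomial.X ^ bigDescents ((n + 1) :: joinMax n a c) =
        (if i = 0 then 1 else Polynomial.X : Polynomial ℤ) *
          Polynomial.X ^ bigDescents (joinMax n a c) := by
    intro a ha c hc
    subst h
    rw [bigDescents_cons_joinMax (length_add_lt_of_mem_avoiders ha hc), pow_add]
    rcases i with _ | i
    · rw [avoiders_zero, mem_singleton] at ha
      simp [ha]
    · rw [if_neg (List.ne_nil_of_length_eq_add_one (length_of_mem_avoiders ha)),
        if_neg i.succ_ne_zero, pow_one, mul_comm]
  rw [sum_congr rfl fun a ha => sum_congr rfl (hterm a ha)]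
  simp_rw [← mul_sum]
  rw [sum_avoiders_joinMax h]
  rcases i with _ | i
  · simp [constantCoeff_B132]
  · simp

theorem coeff_succ_B132 (n : ℕ) :
    coeff (n + 1) B132 =
      coeff (n + 1) Bbar132 + coeff n ((B132 - 1) * (1 + C Polynomial.X * (B132 - 1))) := by
  rw [coeff_B132, sum_avoiders_succ, coeff_mul,
    sum_congr rfl fun p hp => sum_avoiders_joinMax (HasAntidiagonal.mem_antidiagonal.mp hp),
    sum_add_distrib, sum_antidiagonal_ite_fst_eq_zero]

theorem coeff_succ_succ_Bbar132 (n : ℕ) :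
    coeff (n + 2) Bbar132 = coeff (n + 1) Bbar132 +
      Polynomial.X * coeff n ((B132 - 1) * (1 + C Polynomial.X * (B132 - 1))) := by
  rw [coeff_succ_Bbar132 (n + 1), sum_avoiders_succ, coeff_mul, mul_sum,
    sum_congr rfl fun p hp => sum_avoiders_cons_joinMax (HasAntidiagonal.mem_antidiagonal.mp hp),
    sum_add_distrib, sum_antidiagonal_ite_fst_eq_zero]

theorem B132_sub_one_eq :
    B132 - 1 = Bbar132 + X * ((B132 - 1) * (1 + C Polynomial.X * (B132 - 1))) := by
  ext (_ | n)
  · simp [constantCoeff_B132, constantCoeff_Bbar132]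
  · rw [map_sub, coeff_one, if_neg n.succ_ne_zero, sub_zero, map_add, coeff_succ_X_mul,
      coeff_succ_B132]

theorem Bbar132_eq :
    Bbar132 = X * (1 + Bbar132 +
      C Polynomial.X * X * ((B132 - 1) * (1 + C Polynomial.X * (B132 - 1)))) := by
  ext (_ | _ | n)
  · simp [constantCoeff_Bbar132]
  · simp [coeff_succ_Bbar132, avoiders_zero, bigDescents, constantCoeff_Bbar132]
  · rw [coeff_succ_X_mul, map_add, map_add, coeff_one, if_neg n.succ_ne_zero, zero_add, mul_assoc,
      coeff_C_mul, coeff_succ_X_mul, coeff_succ_succ_Bbar132]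

/-- The system of functional equations
`B = 1 + B̄ + x(B−1) + tx(B−1)²` and `B̄ = x(1 + B̄ + t(B − B̄ − 1))`. -/
theorem genfun_system_avoids132 :
    letI X : PowerSeries (Polynomial ℤ) := PowerSeries.X
    letI T : PowerSeries (Polynomial ℤ) := PowerSeries.C Polynomial.X
    B132 = 1 + Bbar132 + X * (B132 - 1) + T * X * (B132 - 1) ^ 2 ∧
    Bbar132 = X * (1 + Bbar132 + T * (B132 - Bbar132 - 1)) :=
  ⟨by linear_combination B132_sub_one_eq,
    by linear_combination Bbar132_eq - C Polynomial.X * X * B132_sub_one_eq⟩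
end

section
/- Let B = Σ_{n≥0} (Σ_{π ∈ S_n(132)} t^{bdes(π)}) x^n, regarded as a formal power series in x with coefficients in ℤ[t]. Then, in (ℤ[t])[[x]], the series B satisfies the algebraic identity ( (1 − 2(1−t)x + (1−t)(1−2t)x²) − 2tx(1 − (1−t)x)·B )² = 1 − 4x + 6(1−t)x² − 4(1−t)²x³ + (1−t)²x⁴. -/
open scoped Classical

/-! A 132-avoider of size `n + 1` whose maximum sits at position `k` is the word
`(α + (n - k)) n β` for 132-avoiders `α`, `β` of sizes `k` and `n - k`: an entry left of the
maximum smaller than one right of it would form a 132. Its big descents are those of `α` and `β`,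
plus one right after the maximum unless `β` is empty, or `k = 0` and `β` starts with its own
maximum. Writing `C` for the generating function of 132-avoiders that start with their maximum,
this gives `C = 1 + x (t B + (1 - t) C)` and `B = 1 + x (t B² + (1 - t) (C + B - 1))`.
Eliminating `C` leaves a quadratic equation for `B`, and the claim is its completed square. -/

open Finset Function

namespace Equiv.Perm

section OneLine

variable {N : ℕ}

/-- The one-line notation of `π` as a sequence of naturals, padded with zeros from position `N`
on; positions and values can then be handled with `omega` instead of `Fin` arithmetic. -/
def oneLine (π : Perm (Fin N)) (i : ℕ) : ℕ := if h : i < N then π ⟨i, h⟩ else 0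

theorem oneLine_of_lt (π : Perm (Fin N)) {i : ℕ} (h : i < N) : π.oneLine i = π ⟨i, h⟩ :=
  dif_pos h

theorem oneLine_of_le (π : Perm (Fin N)) {i : ℕ} (h : N ≤ i) : π.oneLine i = 0 :=
  dif_neg h.not_gt

theorem oneLine_lt (π : Perm (Fin N)) {i : ℕ} (h : i < N) : π.oneLine i < N := by
  rw [oneLine_of_lt π h]; exact Fin.isLt _

theorem oneLine_injOn (π : Perm (Fin N)) : Set.InjOn π.oneLine (Set.Iio N) := by
  intro i hi j hj hij
  rw [oneLine_of_lt π hi, oneLine_of_lt π hj] at hij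
  simpa using congrArg Fin.val (π.injective (Fin.ext hij))

theorem oneLine_ne (π : Perm (Fin N)) {i j : ℕ} (hi : i < N) (hj : j < N) (h : i ≠ j) :
    π.oneLine i ≠ π.oneLine j :=
  fun e => h (π.oneLine_injOn hi hj e)

theorem val_symm_last_eq_iff {n k : ℕ} (π : Perm (Fin (n + 1))) (hk : k < n + 1) :
    (π.symm (Fin.last n) : ℕ) = k ↔ π.oneLine k = n := by
  have : (π ⟨k, hk⟩ : ℕ) = n ↔ π ⟨k, hk⟩ = Fin.last n := by
    rw [Fin.ext_iff, Fin.val_last]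
  rw [oneLine_of_lt π hk, this, ← eq_symm_apply, eq_comm, Fin.ext_iff]

theorem oneLine_injective : Injective (oneLine : Perm (Fin N) → ℕ → ℕ) := by
  intro π σ h
  ext i
  simpa [oneLine_of_lt _ i.isLt] using congrFun h i

noncomputable def ofOneLine (f : ℕ → ℕ) (hlt : ∀ i < N, f i < N)
    (hinj : Set.InjOn f (Set.Iio N)) : Perm (Fin N) :=
  Equiv.ofBijective (fun i => ⟨f i, hlt i i.isLt⟩) <| Finite.injective_iff_bijective.mp
    fun i j h => Fin.ext (hinj i.isLt j.isLt (congrArg Fin.val h))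

theorem oneLine_ofOneLine (f : ℕ → ℕ) (hlt : ∀ i < N, f i < N)
    (hinj : Set.InjOn f (Set.Iio N)) (i : ℕ) :
    (ofOneLine f hlt hinj).oneLine i = if i < N then f i else 0 := by
  unfold oneLine; split_ifs <;> rfl

theorem contains_perm132_iff (π : Perm (Fin N)) :
    Contains π perm132 ↔ ∃ i j l, i < j ∧ j < l ∧ l < N ∧
      π.oneLine i < π.oneLine l ∧ π.oneLine l < π.oneLine j := by
  constructor
  · rintro ⟨f, hf, h⟩
    refine ⟨f 0, f 1, f 2, hf (by decide), hf (by decide), (f 2).isLt, ?_⟩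
    simp only [oneLine_of_lt _ (Fin.isLt _), Fin.eta]
    exact ⟨(h 0 2).mp (by decide), (h 2 1).mp (by decide)⟩
  · rintro ⟨i, j, l, hij, hjl, hl, h1, h2⟩
    rw [oneLine_of_lt π (by omega), oneLine_of_lt π hl] at h1
    rw [oneLine_of_lt π hl, oneLine_of_lt π (by omega)] at h2
    refine ⟨![⟨i, by omega⟩, ⟨j, by omega⟩, ⟨l, hl⟩], ?_, ?_⟩
    · intro a b hab
      fin_cases a <;> fin_cases b <;> simp [Fin.lt_def] at hab ⊢ <;> omega
    · intro a b
      fin_cases a <;> fin_cases b <;> simp [perm132, -Fin.val_fin_lt, Fin.lt_def] <;> omega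

theorem bdes_eq_card (π : Perm (Fin N)) :
    bdes π = #{i ∈ range N | i + 1 < N ∧ π.oneLine (i + 1) + 1 < π.oneLine i} := by
  unfold bdes
  congr 1
  refine filter_congr fun i _ => ⟨fun ⟨h, p⟩ => ⟨h, ?_⟩, fun ⟨h, p⟩ => ⟨h, ?_⟩⟩
  · rwa [oneLine_of_lt π h, oneLine_of_lt π (by omega)]
  · rwa [oneLine_of_lt π h, oneLine_of_lt π (by omega)] at p

end OneLine

section Glue

variable {k m : ℕ} (α : Perm (Fin k)) (β : Perm (Fin m))

/-- The one-line notation `(α + m) (k + m) β` of `glue α β`: every 132-avoider with its maximum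
at position `k` has this shape. -/
def glueSeq (i : ℕ) : ℕ :=
  if i < k then α.oneLine i + m else if i = k then k + m else β.oneLine (i - (k + 1))

theorem glueSeq_of_lt {i : ℕ} (h : i < k) : glueSeq α β i = α.oneLine i + m := if_pos h

theorem glueSeq_self : glueSeq α β k = k + m := by simp [glueSeq]

theorem glueSeq_add (j : ℕ) : glueSeq α β (k + 1 + j) = β.oneLine j := by
  simp [glueSeq, show ¬ k + 1 + j < k by omega, show k + 1 + j ≠ k by omega]

theorem glueSeq_lt {i : ℕ} (hi : i < k + m + 1) : glueSeq α β i < k + m + 1 := by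
  have hα := α.oneLine_lt (i := i)
  have hβ := β.oneLine_lt (i := i - (k + 1))
  unfold glueSeq
  split_ifs <;> omega

theorem glueSeq_injOn : Set.InjOn (glueSeq α β) (Set.Iio (k + m + 1)) := by
  intro i hi j hj hij
  simp only [Set.mem_Iio] at hi hj
  have hαi := α.oneLine_lt (i := i)
  have hαj := α.oneLine_lt (i := j)
  have hβi := β.oneLine_lt (i := i - (k + 1))
  have hβj := β.oneLine_lt (i := j - (k + 1))
  unfold glueSeq at hij
  split_ifs at hij with hik hjk <;> try omega
  · exact α.oneLine_injOn hik hjk (by omega)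
  · have := β.oneLine_injOn (show i - (k + 1) < m by omega) (show j - (k + 1) < m by omega) hij
    omega

noncomputable def glue : Perm (Fin (k + m + 1)) :=
  ofOneLine (glueSeq α β) (fun _ => glueSeq_lt α β) (glueSeq_injOn α β)

theorem oneLine_glue (i : ℕ) : (glue α β).oneLine i = glueSeq α β i := by
  rw [glue, oneLine_ofOneLine]
  split_ifs with h
  · rfl
  · rw [glueSeq, if_neg (by omega), if_neg (by omega), oneLine_of_le β (by omega)]

theorem glue_injective2 : Injective2 (glue : Perm (Fin k) → Perm (Fin m) → _) := by
  intro α α' β β' h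
  have hseq i : glueSeq α β i = glueSeq α' β' i := by
    rw [← oneLine_glue, ← oneLine_glue, h]
  constructor <;> refine oneLine_injective (funext fun i => ?_)
  · by_cases hi : i < k
    · simpa only [glueSeq_of_lt _ _ hi, Nat.add_right_cancel_iff] using hseq i
    · rw [oneLine_of_le _ (not_lt.mp hi), oneLine_of_le _ (not_lt.mp hi)]
  · simpa only [glueSeq_add] using hseq (k + 1 + i)

theorem oneLine_glue_self : (glue α β).oneLine k = k + m := by
  rw [oneLine_glue, glueSeq_self]

theorem contains_glue_iff :
    Contains (glue α β) perm132 ↔ Contains α perm132 ∨ Contains β perm132 := by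
  simp only [contains_perm132_iff, oneLine_glue]
  have hα i := α.oneLine_lt (i := i)
  have hβ i := β.oneLine_lt (i := i)
  constructor
  · rintro ⟨i, j, l, hij, hjl, hl, h1, h2⟩
    by_cases hlk : l < k
    · left
      refine ⟨i, j, l, hij, hjl, hlk, ?_⟩
      simpa only [glueSeq_of_lt α β hlk, glueSeq_of_lt α β (show i < k by omega),
        glueSeq_of_lt α β (show j < k by omega), Nat.add_lt_add_iff_right] using And.intro h1 h2
    by_cases hki : k < i
    · right
      obtain ⟨i, rfl⟩ : ∃ i', i = k + 1 + i' := ⟨i - (k + 1), by omega⟩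
      obtain ⟨j, rfl⟩ : ∃ j', j = k + 1 + j' := ⟨j - (k + 1), by omega⟩
      obtain ⟨l, rfl⟩ : ∃ l', l = k + 1 + l' := ⟨l - (k + 1), by omega⟩
      rw [glueSeq_add, glueSeq_add] at h1 h2
      exact ⟨i, j, l, by omega, by omega, by omega, h1, h2⟩
    -- now `i ≤ k ≤ l`: the maximum is not involved, and the `α`-block lies above `β`
    exfalso
    have := hα i; have := hα j; have := hβ (l - (k + 1)); have := hβ (j - (k + 1))
    unfold glueSeq at h1 h2
    split_ifs at h1 h2 <;> omega
  · rintro (⟨i, j, l, hij, hjl, hl, h⟩ | ⟨i, j, l, hij, hjl, hl, h⟩)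
    · refine ⟨i, j, l, hij, hjl, by omega, ?_⟩
      simpa only [glueSeq_of_lt α β hl, glueSeq_of_lt α β (show i < k by omega),
        glueSeq_of_lt α β (show j < k by omega), Nat.add_lt_add_iff_right] using h
    · refine ⟨k + 1 + i, k + 1 + j, k + 1 + l, by omega, by omega, by omega, ?_⟩
      simpa only [glueSeq_add] using h

theorem avoids_glue_iff :
    Avoids (glue α β) perm132 ↔ Avoids α perm132 ∧ Avoids β perm132 := by
  simp only [Avoids, contains_glue_iff, not_or]

theorem bdes_glue : bdes (glue α β) =
    bdes α + bdes β + if 0 < m ∧ β.oneLine 0 + 1 < k + m then 1 else 0 := by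
  simp only [bdes_eq_card, card_filter, oneLine_glue]
  rw [show range (k + m + 1) = range (k + 1 + m) by rw [Nat.add_right_comm], sum_range_add,
    sum_range_succ]
  have hleft : ∀ i ∈ range k,
      (if i + 1 < k + m + 1 ∧ glueSeq α β (i + 1) + 1 < glueSeq α β i then 1 else 0) =
        if i + 1 < k ∧ α.oneLine (i + 1) + 1 < α.oneLine i then 1 else 0 := by
    intro i hi
    rw [mem_range] at hi
    have := α.oneLine_lt hi
    rw [glueSeq_of_lt α β hi]
    rcases Nat.lt_or_ge (i + 1) k with h | h
    · rw [glueSeq_of_lt α β h]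
      exact if_congr (by omega) rfl rfl
    · rw [show i + 1 = k by omega, glueSeq_self]
      exact if_congr (by omega) rfl rfl
  have hright : ∀ j ∈ range m,
      (if k + 1 + j + 1 < k + m + 1 ∧
          glueSeq α β (k + 1 + j + 1) + 1 < glueSeq α β (k + 1 + j) then 1 else 0) =
        if j + 1 < m ∧ β.oneLine (j + 1) + 1 < β.oneLine j then 1 else 0 := by
    intro j _
    rw [show k + 1 + j + 1 = k + 1 + (j + 1) by ring, glueSeq_add, glueSeq_add]
    exact if_congr (by omega) rfl rfl
  have hjunction :
      (if k + 1 < k + m + 1 ∧ glueSeq α β (k + 1) + 1 < glueSeq α β k then 1 else 0) =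
        if 0 < m ∧ β.oneLine 0 + 1 < k + m then 1 else 0 := by
    rw [show k + 1 = k + 1 + 0 from rfl, glueSeq_add, glueSeq_self]
    exact if_congr (by omega) rfl rfl
  rw [sum_congr rfl hleft, sum_congr rfl hright, hjunction]
  ring

end Glue

section Decomposition

variable {N : ℕ}

theorem oneLine_right_lt_left_of_avoids {π : Perm (Fin N)} (hπ : Avoids π perm132) {i j k : ℕ}
    (hk : π.oneLine k + 1 = N) (hik : i < k) (hkj : k < j) (hj : j < N) :
    π.oneLine j < π.oneLine i := by
  have hjk := π.oneLine_ne hj (show k < N by omega) (by omega)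
  have hij := π.oneLine_ne (show i < N by omega) hj (by omega)
  have := π.oneLine_lt hj
  by_contra! hle
  exact hπ ((contains_perm132_iff π).mpr ⟨i, k, j, hik, hkj, hj, by omega, by omega⟩)

variable {k m : ℕ} {π : Perm (Fin (k + m + 1))}

-- Pigeonhole: the `m` entries right of the maximum are distinct and below the entry at `i`.
theorem le_oneLine_of_avoids (hπ : Avoids π perm132) (hk : π.oneLine k = k + m) {i : ℕ}
    (hi : i < k) : m ≤ π.oneLine i := by
  have := card_le_card_of_injOn (s := range m) (t := range (π.oneLine i))
    (fun j => π.oneLine (k + 1 + j))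
    (fun j hj => by
      simp only [coe_range, Set.mem_Iio] at hj ⊢
      exact oneLine_right_lt_left_of_avoids hπ (by omega) hi (by omega) (by omega))
    (fun a ha b hb h => by
      simp only [coe_range, Set.mem_Iio] at ha hb
      have := π.oneLine_injOn (Set.mem_Iio.mpr (show k + 1 + a < k + m + 1 by omega))
        (Set.mem_Iio.mpr (show k + 1 + b < k + m + 1 by omega)) h
      omega)
  simpa using this

-- Pigeonhole: the `k + 1` entries up to the maximum are distinct and above the entry at `j`.
theorem oneLine_lt_of_avoids (hπ : Avoids π perm132) (hk : π.oneLine k = k + m) {j : ℕ}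
    (hkj : k < j) (hj : j < k + m + 1) : π.oneLine j < m := by
  have hjk := π.oneLine_ne hj (show k < k + m + 1 by omega) hkj.ne'
  have := card_le_card_of_injOn (s := range (k + 1)) (t := Ioo (π.oneLine j) (k + m + 1))
    π.oneLine
    (fun i hi => by
      simp only [coe_range, Set.mem_Iio, coe_Ioo, Set.mem_Ioo] at hi ⊢
      have := π.oneLine_lt (show i < k + m + 1 by omega)
      rcases Nat.lt_or_ge i k with h | h
      · exact ⟨oneLine_right_lt_left_of_avoids hπ (by omega) h hkj hj, this⟩
      · obtain rfl : i = k := by omega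
        have := π.oneLine_lt hj
        rw [hk] at hjk ⊢
        omega)
    (π.oneLine_injOn.mono fun i hi => by simp only [coe_range, Set.mem_Iio] at hi ⊢; omega)
  simp only [card_range, Nat.card_Ioo] at this
  omega

theorem exists_glue_eq (hπ : Avoids π perm132) (hk : π.oneLine k = k + m) :
    ∃ α β, glue α β = π := by
  have hleft {i} (hi : i < k) : m ≤ π.oneLine i ∧ π.oneLine i < k + m := by
    have := π.oneLine_lt (show i < k + m + 1 by omega)
    have := π.oneLine_ne (show i < k + m + 1 by omega) (show k < k + m + 1 by omega) hi.ne
    exact ⟨le_oneLine_of_avoids hπ hk hi, by omega⟩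
  have hαlt : ∀ i < k, π.oneLine i - m < k := fun i hi => by have := hleft hi; omega
  have hαinj : Set.InjOn (fun i => π.oneLine i - m) (Set.Iio k) := by
    intro a ha b hb h
    simp only [Set.mem_Iio] at ha hb h
    have := hleft ha; have := hleft hb
    exact π.oneLine_injOn (Set.mem_Iio.mpr (by omega)) (Set.mem_Iio.mpr (by omega)) (by omega)
  have hβlt : ∀ j < m, π.oneLine (k + 1 + j) < m :=
    fun j hj => oneLine_lt_of_avoids hπ hk (by omega) (by omega)
  have hβinj : Set.InjOn (fun j => π.oneLine (k + 1 + j)) (Set.Iio m) := by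
    intro a ha b hb h
    simp only [Set.mem_Iio] at ha hb
    have := π.oneLine_injOn (Set.mem_Iio.mpr (by omega)) (Set.mem_Iio.mpr (by omega)) h
    omega
  refine ⟨ofOneLine _ hαlt hαinj, ofOneLine _ hβlt hβinj, ?_⟩
  refine oneLine_injective (funext fun i => ?_)
  rw [oneLine_glue]
  rcases lt_trichotomy i k with h | rfl | h
  · rw [glueSeq_of_lt _ _ h, oneLine_ofOneLine, if_pos h]
    have := hleft h
    omega
  · rw [glueSeq_self, hk]
  · obtain ⟨j, rfl⟩ : ∃ j, i = k + 1 + j := ⟨i - (k + 1), by omega⟩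
    rw [glueSeq_add, oneLine_ofOneLine]
    split_ifs with hj
    · rfl
    · rw [oneLine_of_le _ (by omega)]

end Decomposition

end Equiv.Perm

open Polynomial Equiv Equiv.Perm

noncomputable def bdesPoly (n : ℕ) : ℤ[X] :=
  ∑ π ∈ {π : Perm (Fin n) | Avoids π perm132}, X ^ bdes π

/-- 132-avoiders starting with their maximum; for `n = 0` the condition holds, so this is `1`. -/
noncomputable def bdesPolyMaxFirst (n : ℕ) : ℤ[X] :=
  ∑ π ∈ {π : Perm (Fin n) | Avoids π perm132 ∧ n ≤ π.oneLine 0 + 1}, X ^ bdes π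

/-- The weight of the right block `β` of `glue α β` for `α` of size `k` (see `bdes_glue`). -/
noncomputable def junctionPoly (k m : ℕ) : ℤ[X] :=
  ∑ β ∈ {β : Perm (Fin m) | Avoids β perm132},
    X ^ (bdes β + if 0 < m ∧ β.oneLine 0 + 1 < k + m then 1 else 0)

theorem bdesPoly_zero : bdesPoly 0 = 1 := by
  simp [bdesPoly, bdes, Avoids, Contains]

theorem bdesPolyMaxFirst_zero : bdesPolyMaxFirst 0 = 1 := by
  simp [bdesPolyMaxFirst, bdes, Avoids, Contains]

theorem sum_maxAt_eq_bdesPoly_mul {n k m : ℕ} (h : k + m = n) :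
    ∑ π ∈ {π : Perm (Fin (n + 1)) | Avoids π perm132 ∧ (π.symm (Fin.last n) : ℕ) = k},
      X ^ bdes π = bdesPoly k * junctionPoly k m := by
  subst h
  rw [bdesPoly, junctionPoly, sum_mul_sum, ← sum_product']
  symm
  refine sum_bij (fun p _ => glue p.1 p.2) ?_ ?_ ?_ ?_
  · rintro ⟨α, β⟩ hp
    simp only [mem_product, mem_filter, mem_univ, true_and] at hp ⊢
    exact ⟨(avoids_glue_iff α β).mpr hp,
      (val_symm_last_eq_iff _ (by omega)).mpr (oneLine_glue_self α β)⟩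
  · rintro ⟨α, β⟩ - ⟨α', β'⟩ - h
    obtain ⟨rfl, rfl⟩ := glue_injective2 h
    rfl
  · intro π hπ
    simp only [mem_filter, mem_univ, true_and] at hπ
    obtain ⟨α, β, rfl⟩ := exists_glue_eq hπ.1 ((val_symm_last_eq_iff π (by omega)).mp hπ.2)
    exact ⟨(α, β), by simpa using (avoids_glue_iff α β).mp hπ.1, rfl⟩
  · rintro ⟨α, β⟩ -
    rw [bdes_glue, pow_add, pow_add, pow_add, mul_assoc]

theorem bdesPoly_succ (n : ℕ) :
    bdesPoly (n + 1) = ∑ p ∈ antidiagonal n, bdesPoly p.1 * junctionPoly p.1 p.2 := by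
  rw [Nat.sum_antidiagonal_eq_sum_range_succ (fun k m => bdesPoly k * junctionPoly k m),
    bdesPoly, ← sum_fiberwise_of_maps_to (t := range (n + 1))
      (g := fun π : Perm (Fin (n + 1)) => (π.symm (Fin.last n) : ℕ))
      fun π _ => mem_range.mpr (Fin.isLt _)]
  refine sum_congr rfl fun k hk => ?_
  rw [filter_filter, ← sum_maxAt_eq_bdesPoly_mul (n := n) (by rw [mem_range] at hk; omega)]

theorem bdesPolyMaxFirst_succ (n : ℕ) : bdesPolyMaxFirst (n + 1) = junctionPoly 0 n := by
  rw [← one_mul (junctionPoly 0 n), ← bdesPoly_zero, ← sum_maxAt_eq_bdesPoly_mul (zero_add n),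
    bdesPolyMaxFirst]
  refine sum_congr (filter_congr fun π _ => and_congr_right fun _ => ?_) fun _ _ => rfl
  rw [val_symm_last_eq_iff π n.succ_pos]
  have := π.oneLine_lt n.succ_pos
  omega

theorem junctionPoly_zero_left (m : ℕ) :
    junctionPoly 0 m = X * bdesPoly m + (1 - X) * bdesPolyMaxFirst m := by
  let A : Finset (Perm (Fin m)) := {β | Avoids β perm132}
  let S : ℤ[X] := ∑ β ∈ A with m ≤ β.oneLine 0 + 1, X ^ bdes β
  let S' : ℤ[X] := ∑ β ∈ A with ¬ m ≤ β.oneLine 0 + 1, X ^ bdes β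
  have hb : bdesPoly m = S + S' := (sum_filter_add_sum_filter_not _ _ _).symm
  have hc : bdesPolyMaxFirst m = S := by rw [bdesPolyMaxFirst, ← filter_filter]
  have hj : junctionPoly 0 m = S + X * S' := by
    rw [junctionPoly, ← sum_filter_add_sum_filter_not _ (fun β => m ≤ β.oneLine 0 + 1),
      mul_sum]
    congr 1 <;> refine sum_congr rfl fun β hβ => ?_ <;> rw [mem_filter] at hβ
    · rw [if_neg (by omega), add_zero]
    · rw [if_pos (by omega), pow_succ, mul_comm]
  rw [hj, hb, hc]
  ring

theorem junctionPoly_of_pos {k : ℕ} (hk : 0 < k) (m : ℕ) :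
    junctionPoly k m = X * bdesPoly m + (1 - X) * if m = 0 then 1 else 0 := by
  rcases Nat.eq_zero_or_pos m with rfl | hm
  · have : junctionPoly k 0 = bdesPoly 0 := sum_congr rfl fun β _ => by simp
    rw [this, bdesPoly_zero, if_pos rfl]
    ring
  · rw [junctionPoly, bdesPoly, mul_sum, if_neg hm.ne', mul_zero, add_zero]
    refine sum_congr rfl fun β _ => ?_
    rw [if_pos ⟨hm, by have := β.oneLine_lt hm; omega⟩, pow_succ, mul_comm]

noncomputable def maxFirstSeries : PowerSeries ℤ[X] := PowerSeries.mk bdesPolyMaxFirst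

theorem coeff_B132_s16 (n : ℕ) : PowerSeries.coeff n B132 = bdesPoly n := PowerSeries.coeff_mk _ _

theorem coeff_maxFirstSeries (n : ℕ) :
    PowerSeries.coeff n maxFirstSeries = bdesPolyMaxFirst n := PowerSeries.coeff_mk _ _

theorem one_sub_C_X : (1 - PowerSeries.C X : PowerSeries ℤ[X]) = PowerSeries.C (1 - X) := by
  rw [map_sub, map_one]

/-- Put in this shape, the sum over `k + m = n` is a coefficient of a product of series. -/
theorem bdesPoly_mul_junctionPoly (k m : ℕ) :
    bdesPoly k * junctionPoly k m = X * (bdesPoly k * bdesPoly m) + (1 - X) *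
      (PowerSeries.coeff k 1 * bdesPolyMaxFirst m +
        PowerSeries.coeff k (B132 - 1) * PowerSeries.coeff m 1) := by
  simp only [map_sub, coeff_B132_s16, PowerSeries.coeff_one]
  rcases Nat.eq_zero_or_pos k with rfl | hk
  · rw [junctionPoly_zero_left, bdesPoly_zero]
    simp
  · simp only [junctionPoly_of_pos hk, if_neg hk.ne']
    ring

theorem maxFirstSeries_eq : maxFirstSeries = 1 + PowerSeries.X *
    (PowerSeries.C X * B132 + (1 - PowerSeries.C X) * maxFirstSeries) := by
  refine PowerSeries.ext fun n => ?_
  rcases n with _ | n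
  · simp [coeff_maxFirstSeries, bdesPolyMaxFirst_zero]
  · rw [map_add, PowerSeries.coeff_one, if_neg n.succ_ne_zero, zero_add,
      PowerSeries.coeff_succ_X_mul, map_add, one_sub_C_X, PowerSeries.coeff_C_mul,
      PowerSeries.coeff_C_mul, coeff_B132_s16, coeff_maxFirstSeries, coeff_maxFirstSeries,
      bdesPolyMaxFirst_succ, junctionPoly_zero_left]

theorem B132_eq : B132 = 1 + PowerSeries.X * (PowerSeries.C X * B132 ^ 2 +
    (1 - PowerSeries.C X) * (maxFirstSeries + B132 - 1)) := by
  refine PowerSeries.ext fun n => ?_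
  rcases n with _ | n
  · simp [coeff_B132_s16, bdesPoly_zero]
  · rw [map_add, PowerSeries.coeff_one, if_neg n.succ_ne_zero, zero_add,
      PowerSeries.coeff_succ_X_mul, map_add, one_sub_C_X, PowerSeries.coeff_C_mul,
      PowerSeries.coeff_C_mul, coeff_B132_s16, bdesPoly_succ,
      show maxFirstSeries + B132 - 1 = 1 * maxFirstSeries + (B132 - 1) * 1 by ring, sq,
      map_add, PowerSeries.coeff_mul, PowerSeries.coeff_mul, PowerSeries.coeff_mul, mul_sum,
      ← sum_add_distrib, mul_sum, ← sum_add_distrib]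
    refine sum_congr rfl fun p _ => ?_
    rw [bdesPoly_mul_junctionPoly, coeff_B132_s16, coeff_B132_s16, coeff_maxFirstSeries]

/-- The algebraic (squared) form of the closed formula for `B(t,x;132)`:
`((1 − 2(1−t)x + (1−t)(1−2t)x²) − 2tx(1 − (1−t)x)·B)²
  = 1 − 4x + 6(1−t)x² − 4(1−t)²x³ + (1−t)²x⁴`. -/
theorem genfun_avoids132_algebraic :
    letI X : PowerSeries (Polynomial ℤ) := PowerSeries.X
    letI T : PowerSeries (Polynomial ℤ) := PowerSeries.C Polynomial.X
    ((1 - 2 * (1 - T) * X + (1 - T) * (1 - 2 * T) * X ^ 2) -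
        2 * T * X * (1 - (1 - T) * X) * B132) ^ 2 =
      1 - 4 * X + 6 * (1 - T) * X ^ 2 - 4 * (1 - T) ^ 2 * X ^ 3 + (1 - T) ^ 2 * X ^ 4 := by
  set x : PowerSeries ℤ[X] := PowerSeries.X
  set T : PowerSeries ℤ[X] := PowerSeries.C X
  set u := 1 - (1 - T) * x
  -- the combination below eliminates `maxFirstSeries`, leaving the quadratic equation for `B132`
  linear_combination (-4 * x * T * u) * (u * B132_eq + x * (1 - T) * maxFirstSeries_eq)
end

section
/- Let n ≥ 2, let π ∈ S_n be a 321-avoiding permutation, and suppose k ∈ {1,…,n−1} is a small descent of π, i.e., π_k = π_{k+1} + 1. Then π_k = k+1, π_{k+1} = k, and the prefix π_1π_2⋯π_{k−1} consists exactly of the values 1, 2, …, k−1 (in particular, it is a 321-avoiding permutation of {1,…,k−1}). -/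
open scoped Classical

lemma perm321_val (a : Fin 3) : ((perm321 a : Fin 3) : ℕ) = 2 - (a : ℕ) := by
  fin_cases a <;> rfl

lemma avoids321_aux {n : ℕ} (π : Equiv.Perm (Fin n)) (hav : Avoids π perm321)
    (i j l : Fin n) (hij : i < j) (hjl : j < l)
    (h1 : π j < π i) (h2 : π l < π j) : False := by
  apply hav
  refine ⟨fun a => if (a : ℕ) = 0 then i else if (a : ℕ) = 1 then j else l, ?_, ?_⟩
  · intro a b hab
    rcases a with ⟨a, ha⟩
    rcases b with ⟨b, hb⟩
    simp only [Fin.lt_def] at hab ⊢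
    interval_cases a <;> interval_cases b <;> simp_all <;> omega
  · have h3 : π l < π i := h2.trans h1
    have e1 : ¬ π i < π j := asymm h1
    have e2 : ¬ π j < π l := asymm h2
    have e3 : ¬ π i < π l := asymm h3
    intro a b
    rcases a with ⟨a, ha⟩
    rcases b with ⟨b, hb⟩
    simp only [Fin.lt_def, perm321_val]
    interval_cases a <;> interval_cases b <;> simp_all [lt_irrefl]


/-- If `π` is a 321-avoiding permutation of length `n ≥ 2` and the (0-indexed) position `k`
is a small descent of `π` (i.e., `π k = π (k+1) + 1`), then `π k = k + 1`, `π (k+1) = k`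
(in 0-indexed values), and the prefix before position `k` consists exactly of the `k`
smallest values. -/
theorem smallDescent_of_avoids321 (n : ℕ) (hn : 2 ≤ n) (π : Equiv.Perm (Fin n))
    (hav : Avoids π perm321) (k : ℕ) (hk : k + 1 < n)
    (hsd : (π ⟨k, Nat.lt_of_succ_lt hk⟩ : ℕ) = (π ⟨k + 1, hk⟩ : ℕ) + 1) :
    (π ⟨k, Nat.lt_of_succ_lt hk⟩ : ℕ) = k + 1 ∧ (π ⟨k + 1, hk⟩ : ℕ) = k ∧
    ∀ j : Fin n, (j : ℕ) < k → (π j : ℕ) < k := by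
  set K : Fin n := ⟨k, Nat.lt_of_succ_lt hk⟩ with hK
  set K1 : Fin n := ⟨k + 1, hk⟩ with hK1
  set a : ℕ := (π K1 : ℕ) with ha
  have hKlt : K < K1 := by simp [hK, hK1, Fin.lt_def]
  have hπKK1 : π K1 < π K := by rw [Fin.lt_def]; omega
  -- Claim 1: positions before k have values < a
  have claim1 : ∀ j : Fin n, (j : ℕ) < k → (π j : ℕ) < a := by
    intro j hj
    by_contra hc
    push_neg at hc
    have hne1 : π j ≠ π K1 := by
      intro h; exact absurd (π.injective h) (by simp [hK1, Fin.ext_iff]; omega)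
    have hne2 : π j ≠ π K := by
      intro h; exact absurd (π.injective h) (by simp [hK, Fin.ext_iff]; omega)
    have h1 : π K < π j := by
      rw [Fin.lt_def]
      rcases lt_or_eq_of_le hc with h | h
      · rcases Nat.lt_or_ge (a + 1) (π j : ℕ) with h' | h'
        · omega
        · have : (π j : ℕ) = a ∨ (π j : ℕ) = a + 1 := by omega
          rcases this with h'' | h''
          · exact absurd (Fin.ext h'') (by exact fun hh => hne1 hh)
          · exact absurd (Fin.ext (h''.trans hsd.symm)) (fun hh => hne2 hh)
      · exact absurd (Fin.ext h.symm) (fun hh => hne1 hh)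
    have hjK : j < K := by simp [hK, Fin.lt_def]; omega
    exact avoids321_aux π hav j K K1 hjK hKlt h1 hπKK1
  -- Claim 2: positions after k+1 have values > a+1
  have claim2 : ∀ j : Fin n, k + 1 < (j : ℕ) → a + 1 < (π j : ℕ) := by
    intro j hj
    by_contra hc
    push_neg at hc
    have hne1 : π j ≠ π K1 := by
      intro h; exact absurd (π.injective h) (by simp [hK1, Fin.ext_iff]; omega)
    have hne2 : π j ≠ π K := by
      intro h; exact absurd (π.injective h) (by simp [hK, Fin.ext_iff]; omega)
    have h2 : π j < π K1 := by
      rw [Fin.lt_def]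
      have hna : (π j : ℕ) ≠ a := fun h => hne1 (Fin.ext h)
      have hna1 : (π j : ℕ) ≠ a + 1 := fun h => hne2 (Fin.ext (h.trans hsd.symm))
      omega
    have hK1j : K1 < j := by simp [hK1, Fin.lt_def]; omega
    exact avoids321_aux π hav K K1 j hKlt hK1j hπKK1 h2
  -- Counting: the two filters coincide
  have hset : (Finset.univ.filter (fun j : Fin n => (π j : ℕ) < a)) =
      (Finset.univ.filter (fun j : Fin n => (j : ℕ) < k)) := by
    ext j
    simp only [Finset.mem_filter, Finset.mem_univ, true_and]
    constructor
    · intro hj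
      by_contra hc
      push_neg at hc
      rcases Nat.lt_or_ge (k + 1) (j : ℕ) with h | h
      · exact absurd (claim2 j h) (by omega)
      · have : (j : ℕ) = k ∨ (j : ℕ) = k + 1 := by omega
        rcases this with h' | h'
        · have : j = K := Fin.ext h'
          rw [this] at hj; omega
        · have : j = K1 := Fin.ext h'
          rw [this] at hj; omega
    · exact claim1 j
  have han : a < n := (π K1).isLt
  have card1 : (Finset.univ.filter (fun j : Fin n => (π j : ℕ) < a)).card = a := by
    have : (Finset.univ.filter (fun j : Fin n => (π j : ℕ) < a)) =
        (Finset.univ.filter (fun v : Fin n => (v : ℕ) < a)).map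
          ⟨π.symm, π.symm.injective⟩ := by
      ext j
      simp only [Finset.mem_map, Finset.mem_filter, Finset.mem_univ, true_and,
        Function.Embedding.coeFn_mk]
      constructor
      · intro h; exact ⟨π j, h, by simp⟩
      · rintro ⟨v, hv, rfl⟩; simpa using hv
    rw [this, Finset.card_map]
    have : (Finset.univ.filter (fun v : Fin n => (v : ℕ) < a)) =
        Finset.Iio (⟨a, han⟩ : Fin n) := by
      ext v; simp [Fin.lt_def]
    rw [this, Fin.card_Iio]
  have card2 : (Finset.univ.filter (fun j : Fin n => (j : ℕ) < k)).card = k := by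
    have : (Finset.univ.filter (fun j : Fin n => (j : ℕ) < k)) =
        Finset.Iio (⟨k, Nat.lt_of_succ_lt hk⟩ : Fin n) := by
      ext v; simp [Fin.lt_def]
    rw [this, Fin.card_Iio]
  have hak : a = k := by rw [← card1, hset, card2]
  refine ⟨by omega, by omega, fun j hj => by have := claim1 j hj; omega⟩
end
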